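/- arXiv:1307.1952 — 4 statements merged into one kernel-verified Lean document; each statement's English description precedes it below -/
import Mathlib

section
/- For one-dimensional centered Gaussian densities: there is a constant depending only on lower and upper bounds 0 < m ≤ τ², τ̆² ≤ M such that sup over a ∈ ℝ of |∫_{−a}^{a} [φ(x; τ̆²) − φ(x; τ²)] dx| ≥ K·|τ̆² − τ²| whenever |τ̆² − τ²| is sufficiently small, where φ(·; v) is the N(0,v) density. -/
open Real

/-!
Substituting `x = √v u` gives `∫_{-a}^{a} φ(x; v) dx = Φ(a / √v)`, where `Φ(t)` is the standard
normal mass of `[-t, t]`. Since `Φ' = 2 φ(·; 1)`, the map `s ↦ Φ(1 / √s)` has derivative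
`-φ(1 / √s; 1) / s^{3/2}`, bounded away from `0` on `[m, M]` by `φ(1 / √m; 1) / M^{3/2}`; the mean
value theorem turns this into the linear lower bound at `a = 1`. The supremum over `a` is finite
because `φ(·; w) - φ(·; v)` is integrable.
-/

open MeasureTheory ProbabilityTheory Set

section

variable {E : Type*} [NormedAddCommGroup E] [NormedSpace ℝ E]

theorem norm_intervalIntegral_le_integral_norm {f : ℝ → E} (hf : Integrable f) (a b : ℝ) :
    ‖∫ x in a..b, f x‖ ≤ ∫ x, ‖f x‖ :=
  intervalIntegral.norm_integral_le_integral_norm_uIoc.trans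
    (setIntegral_le_integral hf.norm (ae_of_all _ fun _ => norm_nonneg _))

theorem Continuous.hasDerivAt_integral_neg_self [CompleteSpace E] {f : ℝ → E}
    (hf : Continuous f) (t : ℝ) :
    HasDerivAt (fun s => ∫ x in (-s)..s, f x) (f t + f (-t)) t := by
  have hsplit : (fun s => ∫ x in (-s)..s, f x) =
      fun s => (∫ x in (0 : ℝ)..s, f x) - ∫ x in (0 : ℝ)..(-s), f x := by
    funext s
    rw [intervalIntegral.integral_interval_sub_left (hf.intervalIntegrable _ _)
      (hf.intervalIntegrable _ _)]
  rw [hsplit, ← sub_neg_eq_add, ← neg_one_smul ℝ (f (-t))]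
  exact (hf.integral_hasStrictDerivAt 0 t).hasDerivAt.sub
    ((hf.integral_hasStrictDerivAt 0 (-t)).hasDerivAt.scomp t (hasDerivAt_neg t))

end

theorem Convex.mul_abs_sub_le_abs_sub_of_le_deriv {s : Set ℝ} (hs : Convex ℝ s) {f f' : ℝ → ℝ}
    (hf : ∀ x ∈ s, HasDerivAt f (f' x) x) {C : ℝ} (hC : ∀ x ∈ s, C ≤ f' x)
    {x y : ℝ} (hx : x ∈ s) (hy : y ∈ s) : C * |y - x| ≤ |f y - f x| := by
  wlog hxy : x ≤ y generalizing x y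
  · rw [abs_sub_comm, abs_sub_comm (f y)]
    exact this hy hx (le_of_not_ge hxy)
  have hmono := hs.mul_sub_le_image_sub_of_le_deriv
    (fun z hz => (hf z hz).continuousAt.continuousWithinAt)
    (fun z hz => (hf z (interior_subset hz)).differentiableAt.differentiableWithinAt)
    (fun z hz => (hf z (interior_subset hz)).deriv ▸ hC z (interior_subset hz)) x hx y hy hxy
  rw [abs_of_nonneg (sub_nonneg.2 hxy)]
  exact hmono.trans (le_abs_self _)

namespace ProbabilityTheory

theorem continuous_gaussianPDFReal (μ : ℝ) (v : NNReal) : Continuous (gaussianPDFReal μ v) := by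
  unfold gaussianPDFReal
  fun_prop

theorem gaussianPDFReal_zero_neg (v : NNReal) (x : ℝ) :
    gaussianPDFReal 0 v (-x) = gaussianPDFReal 0 v x := by
  simp [gaussianPDFReal]

theorem gaussianPDFReal_antitoneOn (μ : ℝ) (v : NNReal) :
    AntitoneOn (gaussianPDFReal μ v) (Ici μ) := by
  intro x hx y _ hxy
  simp only [gaussianPDFReal]
  gcongr
  exact sub_nonneg.2 hx

theorem gaussianPDFReal_zero_toNNReal {v : ℝ} (hv : 0 ≤ v) (x : ℝ) :
    gaussianPDFReal 0 v.toNNReal x = (√(2 * π * v))⁻¹ * exp (-(x ^ 2) / (2 * v)) := by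
  simp [gaussianPDFReal, Real.coe_toNNReal _ hv]

theorem gaussianPDFReal_zero_toNNReal_eq_inv_sqrt_mul {v : ℝ} (hv : 0 < v) (x : ℝ) :
    gaussianPDFReal 0 v.toNNReal x = (√v)⁻¹ * gaussianPDFReal 0 1 (x / √v) := by
  rw [gaussianPDFReal_zero_toNNReal hv.le, gaussianPDFReal, Real.sqrt_mul' _ hv.le, mul_inv]
  simp only [NNReal.coe_one, mul_one, sub_zero]
  rw [div_pow, Real.sq_sqrt hv.le]
  ring_nf

noncomputable def stdGaussianCentralMass (t : ℝ) : ℝ := ∫ x in (-t)..t, gaussianPDFReal 0 1 x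

theorem intervalIntegral_gaussianPDFReal_neg_self {v : ℝ} (hv : 0 < v) (a : ℝ) :
    ∫ x in (-a)..a, gaussianPDFReal 0 v.toNNReal x = stdGaussianCentralMass (a / √v) := by
  have hsv : √v ≠ 0 := (Real.sqrt_pos.2 hv).ne'
  simp_rw [gaussianPDFReal_zero_toNNReal_eq_inv_sqrt_mul hv, intervalIntegral.integral_const_mul,
    intervalIntegral.integral_comp_div (gaussianPDFReal 0 1) hsv, smul_eq_mul, ← mul_assoc,
    inv_mul_cancel₀ hsv, one_mul, neg_div]
  rfl

theorem hasDerivAt_stdGaussianCentralMass (t : ℝ) :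
    HasDerivAt stdGaussianCentralMass (2 * gaussianPDFReal 0 1 t) t := by
  have := (continuous_gaussianPDFReal 0 1).hasDerivAt_integral_neg_self t
  rwa [gaussianPDFReal_zero_neg, ← two_mul] at this

theorem hasDerivAt_stdGaussianCentralMass_div_sqrt (a : ℝ) {s : ℝ} (hs : 0 < s) :
    HasDerivAt (fun s => stdGaussianCentralMass (a / √s))
      (-(a * gaussianPDFReal 0 1 (a / √s) / (s * √s))) s := by
  have hss : √s ≠ 0 := (Real.sqrt_pos.2 hs).ne'
  have hinner : HasDerivAt (fun s => a / √s) (a * (-(1 / (2 * √s)) / √s ^ 2)) s := by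
    simpa [div_eq_mul_inv] using ((Real.hasDerivAt_sqrt hs.ne').inv hss).const_mul a
  refine ((hasDerivAt_stdGaussianCentralMass _).comp s hinner).congr_deriv ?_
  rw [Real.sq_sqrt hs.le]
  field_simp

theorem mul_abs_sub_le_abs_sub_stdGaussianCentralMass {m M a : ℝ} (hm : 0 < m) (ha : 0 ≤ a)
    {v w : ℝ} (hv : v ∈ Icc m M) (hw : w ∈ Icc m M) :
    a * gaussianPDFReal 0 1 (a / √m) / (M * √M) * |w - v| ≤
      |stdGaussianCentralMass (a / √w) - stdGaussianCentralMass (a / √v)| := by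
  have hbound : ∀ s ∈ Icc m M, a * gaussianPDFReal 0 1 (a / √m) / (M * √M) ≤
      a * gaussianPDFReal 0 1 (a / √s) / (s * √s) := by
    intro s hs
    have hs0 : 0 < s := hm.trans_le hs.1
    have hdensity : gaussianPDFReal 0 1 (a / √m) ≤ gaussianPDFReal 0 1 (a / √s) :=
      gaussianPDFReal_antitoneOn 0 1 (div_nonneg ha (Real.sqrt_nonneg _))
        (div_nonneg ha (Real.sqrt_nonneg _))
        (div_le_div_of_nonneg_left ha (Real.sqrt_pos.2 hm) (Real.sqrt_le_sqrt hs.1))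
    exact div_le_div₀ (mul_nonneg ha (gaussianPDFReal_nonneg 0 1 _))
      (mul_le_mul_of_nonneg_left hdensity ha) (by positivity)
      (mul_le_mul hs.2 (Real.sqrt_le_sqrt hs.2) (Real.sqrt_nonneg _) (hs0.le.trans hs.2))
  have hslope := (convex_Icc m M).mul_abs_sub_le_abs_sub_of_le_deriv
    (f := fun s => -stdGaussianCentralMass (a / √s))
    (fun s hs => (hasDerivAt_stdGaussianCentralMass_div_sqrt a (hm.trans_le hs.1)).neg)
    (fun s hs => by rw [neg_neg]; exact hbound s hs) hv hw
  rwa [neg_sub_neg, abs_sub_comm (stdGaussianCentralMass _)] at hslope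

end ProbabilityTheory

/-- For one-dimensional centered Gaussian densities with variances
in a fixed compact interval `[m,M] ⊂ (0,∞)`, there are constants `K, ε > 0`
(depending only on `m, M`) such that whenever `|τ̆² − τ²| ≤ ε`,
`sup_{a} |∫_{-a}^{a} (φ(x;τ̆²) − φ(x;τ²)) dx| ≥ K |τ̆² − τ²|`. -/
theorem stmt6 (m M : ℝ) (hm : 0 < m) (hmM : m ≤ M) :
    ∃ K > (0 : ℝ), ∃ ε > (0 : ℝ), ∀ v w : ℝ,
      v ∈ Set.Icc m M → w ∈ Set.Icc m M → |w - v| ≤ ε →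
      K * |w - v| ≤
        ⨆ a : ℝ, |∫ x in (-a)..a,
          ((Real.sqrt (2 * π * w))⁻¹ * Real.exp (-(x ^ 2) / (2 * w)) -
            (Real.sqrt (2 * π * v))⁻¹ * Real.exp (-(x ^ 2) / (2 * v)))| := by
  have hM : 0 < M := hm.trans_le hmM
  have hK : 0 < gaussianPDFReal 0 1 (1 / √m) / (M * √M) := by
    have := gaussianPDFReal_pos 0 1 (1 / √m) one_ne_zero
    positivity
  refine ⟨_, hK, 1, one_pos, fun v w hv hw _ => ?_⟩
  have hv0 : 0 < v := hm.trans_le hv.1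
  have hw0 : 0 < w := hm.trans_le hw.1
  simp_rw [← gaussianPDFReal_zero_toNNReal hw0.le, ← gaussianPDFReal_zero_toNNReal hv0.le]
  have hbdd : BddAbove (range fun a => |∫ x in (-a)..a,
      (gaussianPDFReal 0 w.toNNReal x - gaussianPDFReal 0 v.toNNReal x)|) :=
    ⟨_, by
      rintro _ ⟨a, rfl⟩
      exact norm_intervalIntegral_le_integral_norm
        ((integrable_gaussianPDFReal 0 _).sub (integrable_gaussianPDFReal 0 _)) _ _⟩
  refine le_trans ?_ (le_ciSup hbdd 1)
  rw [intervalIntegral.integral_sub ((continuous_gaussianPDFReal 0 _).intervalIntegrable _ _)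
    ((continuous_gaussianPDFReal 0 _).intervalIntegrable _ _),
    intervalIntegral_gaussianPDFReal_neg_self hw0, intervalIntegral_gaussianPDFReal_neg_self hv0]
  simpa only [one_mul] using mul_abs_sub_le_abs_sub_stdGaussianCentralMass hm zero_le_one hv hw
end

section
/- For q-dimensional centered Gaussian measures: if Σ₁ and Σ₂ are q×q symmetric positive definite matrices with eigenvalues in [m, M] ⊂ (0,∞), then the total variation distance ∫_{ℝ^q} |φ(x; Σ₁) − φ(x; Σ₂)| dx ≤ K(q,m,M)·‖Σ₁ − Σ₂‖, where ‖·‖ is any fixed matrix norm and φ(·;Σ) the N(0,Σ) density. -/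
/-!
Write `φ(x; S) = c(S) exp(-Q_S(x)/2)` with `c(S) = (2π)^(-q/2) det(S)^(-1/2)` and
`Q_S(x) = xᵀ S⁻¹ x`. Since `det S ≥ m^q` and `det` is Lipschitz on bounded sets of matrices, the
normalising constants differ by `O(‖S₁ - S₂‖)`. The resolvent identity
`S₂⁻¹ - S₁⁻¹ = S₂⁻¹ (S₁ - S₂) S₁⁻¹` together with `|S⁻¹ x| ≤ |x| / m` gives
`|Q₁(x) - Q₂(x)| ≤ ‖S₁ - S₂‖ |x|² / m²`, while `Q_S(x) ≥ |x|² / M`. Hence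
`|φ(x; S₁) - φ(x; S₂)| ≤ C ‖S₁ - S₂‖ (1 + |x|²) exp(-|x|²/(2M))`, which is at most a multiple of
the integrable function `‖S₁ - S₂‖ exp(-|x|²/(4M))`.
-/

open Matrix Real MeasureTheory

lemma abs_rpow_neg_half_sub_le {ℓ a b : ℝ} (hℓ : 0 < ℓ) (ha : ℓ ≤ a) (hb : ℓ ≤ b) :
    |a ^ (-(1 : ℝ) / 2) - b ^ (-(1 : ℝ) / 2)| ≤ |a - b| / (2 * ℓ * √ℓ) := by
  have hinv {x : ℝ} (hx : 0 ≤ x) : x ^ (-(1 : ℝ) / 2) = (√x)⁻¹ := by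
    rw [neg_div, rpow_neg hx, ← sqrt_eq_rpow]
  have hsa : √ℓ ≤ √a := sqrt_le_sqrt ha
  have hsb : √ℓ ≤ √b := sqrt_le_sqrt hb
  have hℓ' : 0 < √ℓ := sqrt_pos.2 hℓ
  have hsa' : 0 < √a := hℓ'.trans_le hsa
  have hsb' : 0 < √b := hℓ'.trans_le hsb
  have hdiff : (√a)⁻¹ - (√b)⁻¹ = (√b ^ 2 - √a ^ 2) / (√a * √b * (√a + √b)) := by
    field_simp
    ring
  rw [hinv (hℓ.le.trans ha), hinv (hℓ.le.trans hb), hdiff, sq_sqrt (hℓ.le.trans ha),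
    sq_sqrt (hℓ.le.trans hb), abs_div, abs_sub_comm b a,
    abs_of_pos (show 0 < √a * √b * (√a + √b) by positivity)]
  refine div_le_div_of_nonneg_left (abs_nonneg _) (by positivity) ?_
  calc 2 * ℓ * √ℓ = √ℓ * √ℓ * (√ℓ + √ℓ) := by rw [mul_self_sqrt hℓ.le]; ring
    _ ≤ _ := by gcongr

lemma abs_exp_neg_sub_exp_neg_le {s u v : ℝ} (hu : s ≤ u) (hv : s ≤ v) :
    |exp (-u) - exp (-v)| ≤ exp (-s) * |u - v| := by
  wlog h : v ≤ u generalizing u v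
  · rw [abs_sub_comm, abs_sub_comm u]
    exact this hv hu (le_of_not_ge h)
  have hexp : exp (-u) = exp (-v) * exp (-(u - v)) := by rw [← exp_add]; ring_nf
  rw [abs_sub_comm, abs_of_nonneg (sub_nonneg.2 (exp_le_exp.2 (by linarith))),
    abs_of_nonneg (by linarith), hexp]
  calc exp (-v) - exp (-v) * exp (-(u - v)) = exp (-v) * (1 - exp (-(u - v))) := by ring
    _ ≤ exp (-s) * (u - v) :=
      mul_le_mul (exp_le_exp.2 (by linarith)) (by linarith [add_one_le_exp (-(u - v))])
        (sub_nonneg.2 (exp_le_one_iff.2 (by linarith))) (exp_pos _).le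

lemma abs_mul_exp_neg_sub_mul_exp_neg_le {a b s u v : ℝ} (hb : 0 ≤ b) (hu : s ≤ u)
    (hv : s ≤ v) :
    |a * exp (-u) - b * exp (-v)| ≤ (|a - b| + b * |u - v|) * exp (-s) := by
  calc |a * exp (-u) - b * exp (-v)| = |(a - b) * exp (-u) + b * (exp (-u) - exp (-v))| := by
        ring_nf
    _ ≤ |a - b| * exp (-u) + b * |exp (-u) - exp (-v)| := by
      refine (abs_add_le _ _).trans_eq ?_
      rw [abs_mul, abs_mul, abs_of_pos (exp_pos _), abs_of_nonneg hb]
    _ ≤ |a - b| * exp (-s) + b * (exp (-s) * |u - v|) := by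
      gcongr
      exact abs_exp_neg_sub_exp_neg_le hu hv
    _ = _ := by ring

lemma add_mul_mul_exp_neg_two_mul_le {α β s : ℝ} (hα : 0 ≤ α) (hβ : 0 ≤ β) (hs : 0 ≤ s) :
    (α + β * s) * exp (-(2 * s)) ≤ (α + β) * exp (-s) := by
  have hexp : exp (-(2 * s)) = exp (-s) * exp (-s) := by rw [← exp_add]; ring_nf
  have hle : exp (-s) ≤ 1 := exp_le_one_iff.2 (by linarith)
  have hs_exp : s * exp (-s) ≤ 1 := by
    calc s * exp (-s) ≤ exp s * exp (-s) := by gcongr; linarith [add_one_le_exp s]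
      _ = 1 := by rw [← exp_add, add_neg_cancel, exp_zero]
  have he := (exp_pos (-s)).le
  calc (α + β * s) * exp (-(2 * s)) = α * exp (-s) * exp (-s) + β * exp (-s) * (s * exp (-s)) := by
        rw [hexp]; ring
    _ ≤ α * exp (-s) * 1 + β * exp (-s) * 1 := by gcongr
    _ = _ := by ring

lemma integrable_exp_neg_mul_sum_sq {ι : Type*} [Fintype ι] {c : ℝ} (hc : 0 < c) :
    Integrable fun x : ι → ℝ => exp (-(c * ∑ i, x i ^ 2)) := by
  have hprod : (fun x : ι → ℝ => exp (-(c * ∑ i, x i ^ 2))) =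
      fun x => ∏ i, exp (-c * x i ^ 2) := by
    ext x
    rw [← exp_sum, Finset.mul_sum, ← Finset.sum_neg_distrib]
    simp only [neg_mul]
  rw [hprod]
  exact Integrable.fintype_prod fun _ => integrable_exp_neg_mul_sq hc

section

variable {ι : Type*} [Fintype ι]

lemma abs_dotProduct_le (x y : ι → ℝ) :
    |x ⬝ᵥ y| ≤ √(∑ i, x i ^ 2) * √(∑ i, y i ^ 2) := by
  rw [← sqrt_sq_eq_abs, ← sqrt_mul (by positivity)]
  exact sqrt_le_sqrt (Finset.sum_mul_sq_le_sq_mul_sq _ x y)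

lemma sum_sq_mulVec_le {κ : Type*} [Fintype κ] (A : Matrix κ ι ℝ) (v : ι → ℝ) :
    ∑ i, (A *ᵥ v) i ^ 2 ≤ (∑ i, ∑ j, A i j ^ 2) * ∑ j, v j ^ 2 := by
  rw [Finset.sum_mul]
  exact Finset.sum_le_sum fun i _ => Finset.sum_mul_sq_le_sq_mul_sq _ (A i) v

lemma abs_dotProduct_mulVec_le {κ : Type*} [Fintype κ] (A : Matrix κ ι ℝ) (u : κ → ℝ)
    (v : ι → ℝ) :
    |u ⬝ᵥ (A *ᵥ v)| ≤ √(∑ i, ∑ j, A i j ^ 2) * √(∑ i, u i ^ 2) * √(∑ j, v j ^ 2) := by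
  calc |u ⬝ᵥ (A *ᵥ v)| ≤ √(∑ i, u i ^ 2) * √(∑ i, (A *ᵥ v) i ^ 2) := abs_dotProduct_le u _
    _ ≤ √(∑ i, u i ^ 2) * (√(∑ i, ∑ j, A i j ^ 2) * √(∑ j, v j ^ 2)) := by
      rw [← sqrt_mul (by positivity) (∑ j, v j ^ 2)]
      gcongr
      exact sum_sq_mulVec_le A v
    _ = _ := by ring

lemma abs_le_sqrt_sum_sum_sq {κ : Type*} [Fintype κ] (A : Matrix κ ι ℝ) (i : κ) (j : ι) :
    |A i j| ≤ √(∑ i, ∑ j, A i j ^ 2) := by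
  rw [← sqrt_sq_eq_abs]
  gcongr
  calc A i j ^ 2 ≤ ∑ j, A i j ^ 2 :=
        Finset.single_le_sum (f := fun j => A i j ^ 2) (fun j _ => sq_nonneg _) (Finset.mem_univ j)
    _ ≤ ∑ i, ∑ j, A i j ^ 2 :=
        Finset.single_le_sum (f := fun i => ∑ j, A i j ^ 2) (fun i _ => by positivity)
          (Finset.mem_univ i)

lemma Matrix.PosSemidef.sq_dotProduct_mulVec_le {S : Matrix ι ι ℝ} (hS : S.PosSemidef)
    (x y : ι → ℝ) :
    (x ⬝ᵥ (S *ᵥ y)) ^ 2 ≤ (x ⬝ᵥ (S *ᵥ x)) * (y ⬝ᵥ (S *ᵥ y)) := by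
  have hsymm : y ⬝ᵥ (S *ᵥ x) = x ⬝ᵥ (S *ᵥ y) := by
    rw [dotProduct_mulVec, ← mulVec_transpose, dotProduct_comm,
      (isHermitian_iff_isSymm.mp hS.isHermitian).eq]
  have hquad (t : ℝ) : 0 ≤ (y ⬝ᵥ (S *ᵥ y)) * (t * t) + 2 * (x ⬝ᵥ (S *ᵥ y)) * t
      + x ⬝ᵥ (S *ᵥ x) := by
    have := hS.dotProduct_mulVec_nonneg (x + t • y)
    simp only [star_trivial, mulVec_add, mulVec_smul, add_dotProduct, dotProduct_add,
      smul_dotProduct, dotProduct_smul, smul_eq_mul, hsymm] at this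
    linarith
  have := discrim_le_zero hquad
  rw [discrim] at this
  linarith

variable [DecidableEq ι] {m M : ℝ} {S : Matrix ι ι ℝ}

lemma Matrix.PosDef.mulVec_inv_mulVec (hS : S.PosDef) (x : ι → ℝ) : S *ᵥ (S⁻¹ *ᵥ x) = x := by
  rw [mulVec_mulVec, mul_nonsing_inv _ ((isUnit_iff_isUnit_det S).mp hS.isUnit), one_mulVec]

-- `S i j ^ 2 ≤ S i i * S j j ≤ M ^ 2` by Cauchy–Schwarz for the form of `S`.
lemma Matrix.PosSemidef.abs_apply_le (hS : S.PosSemidef)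
    (hb : ∀ x, x ⬝ᵥ (S *ᵥ x) ≤ M * ∑ i, x i ^ 2) (i j : ι) : |S i j| ≤ M := by
  have hentry (k l : ι) : Pi.single k 1 ⬝ᵥ (S *ᵥ Pi.single l 1) = S k l := by simp
  have hdiag (k : ι) : S k k ≤ M := by
    simpa [hentry, Pi.single_apply] using hb (Pi.single k 1)
  have hcs := hS.sq_dotProduct_mulVec_le (Pi.single i 1) (Pi.single j 1)
  simp only [hentry] at hcs
  refine abs_le_of_sq_le_sq ?_ (hS.diag_nonneg.trans (hdiag i))
  nlinarith [hdiag i, hdiag j, hS.diag_nonneg (i := i), hS.diag_nonneg (i := j)]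

lemma Matrix.PosDef.mul_sqrt_sum_sq_inv_mulVec_le (hS : S.PosDef)
    (hb : ∀ x, m * ∑ i, x i ^ 2 ≤ x ⬝ᵥ (S *ᵥ x)) (x : ι → ℝ) :
    m * √(∑ i, (S⁻¹ *ᵥ x) i ^ 2) ≤ √(∑ i, x i ^ 2) := by
  set y := S⁻¹ *ᵥ x
  have hy : m * √(∑ i, y i ^ 2) ^ 2 ≤ √(∑ i, y i ^ 2) * √(∑ i, x i ^ 2) := by
    calc m * √(∑ i, y i ^ 2) ^ 2 = m * ∑ i, y i ^ 2 := by rw [sq_sqrt (by positivity)]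
      _ ≤ y ⬝ᵥ x := by simpa [y, hS.mulVec_inv_mulVec] using hb y
      _ ≤ _ := (le_abs_self _).trans (abs_dotProduct_le y x)
  rcases (sqrt_nonneg (∑ i, y i ^ 2)).eq_or_lt with h | h
  · rw [← h, mul_zero]
    positivity
  · nlinarith

-- With `y = S⁻¹ x`, Cauchy–Schwarz for the form of `S` gives
-- `|x|⁴ = (xᵀ S y)² ≤ (xᵀ S x) (yᵀ S y) ≤ M |x|² (xᵀ S⁻¹ x)`.
lemma Matrix.PosDef.div_le_dotProduct_inv_mulVec (hS : S.PosDef) (hM : 0 < M)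
    (hb : ∀ x, x ⬝ᵥ (S *ᵥ x) ≤ M * ∑ i, x i ^ 2) (x : ι → ℝ) :
    (∑ i, x i ^ 2) / M ≤ x ⬝ᵥ (S⁻¹ *ᵥ x) := by
  set y := S⁻¹ *ᵥ x
  set t := ∑ i, x i ^ 2
  have hQ : x ⬝ᵥ y = y ⬝ᵥ (S *ᵥ y) := by rw [hS.mulVec_inv_mulVec, dotProduct_comm]
  have ht : x ⬝ᵥ (S *ᵥ y) = t := by
    rw [hS.mulVec_inv_mulVec]
    simp [t, dotProduct, sq]
  have hQ0 : 0 ≤ x ⬝ᵥ y := by simpa [hQ] using hS.posSemidef.dotProduct_mulVec_nonneg y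
  have hcs : t ^ 2 ≤ M * t * (x ⬝ᵥ y) := by
    have := hS.posSemidef.sq_dotProduct_mulVec_le x y
    rw [ht, ← hQ] at this
    nlinarith [hb x]
  rw [div_le_iff₀ hM]
  rcases (show 0 ≤ t by positivity).eq_or_lt with h | h
  · rw [← h]
    positivity
  · nlinarith

lemma abs_dotProduct_inv_mulVec_sub_le {S₁ S₂ : Matrix ι ι ℝ} (hS₁ : S₁.PosDef)
    (hS₂ : S₂.PosDef) (hm : 0 < m) (hb₁ : ∀ x, m * ∑ i, x i ^ 2 ≤ x ⬝ᵥ (S₁ *ᵥ x))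
    (hb₂ : ∀ x, m * ∑ i, x i ^ 2 ≤ x ⬝ᵥ (S₂ *ᵥ x)) (x : ι → ℝ) :
    |x ⬝ᵥ (S₁⁻¹ *ᵥ x) - x ⬝ᵥ (S₂⁻¹ *ᵥ x)| ≤
      √(∑ i, ∑ j, (S₁ i j - S₂ i j) ^ 2) * (∑ i, x i ^ 2) / m ^ 2 := by
  have hdiff : x ⬝ᵥ (S₂⁻¹ *ᵥ x) - x ⬝ᵥ (S₁⁻¹ *ᵥ x) =
      (S₂⁻¹ *ᵥ x) ⬝ᵥ ((S₁ - S₂) *ᵥ (S₁⁻¹ *ᵥ x)) := by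
    have hsymm := (isHermitian_iff_isSymm.mp hS₂.inv.isHermitian).eq
    rw [← dotProduct_sub, ← sub_mulVec, inv_sub_inv (iff_of_true hS₂.isUnit hS₁.isUnit),
      ← mulVec_mulVec, ← mulVec_mulVec, dotProduct_mulVec, ← mulVec_transpose, hsymm]
  have hx := sq_sqrt (show 0 ≤ ∑ i, x i ^ 2 by positivity)
  have h₁ := hS₁.mul_sqrt_sum_sq_inv_mulVec_le hb₁ x
  have h₂ := hS₂.mul_sqrt_sum_sq_inv_mulVec_le hb₂ x
  rw [abs_sub_comm, hdiff, le_div_iff₀ (by positivity), ← hx]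
  refine (mul_le_mul_of_nonneg_right (abs_dotProduct_mulVec_le _ _ _) (by positivity)).trans ?_
  calc _ = √(∑ i, ∑ j, (S₁ - S₂) i j ^ 2) * (m * √(∑ i, (S₂⁻¹ *ᵥ x) i ^ 2)) *
        (m * √(∑ i, (S₁⁻¹ *ᵥ x) i ^ 2)) := by ring
    _ ≤ √(∑ i, ∑ j, (S₁ i j - S₂ i j) ^ 2) * √(∑ i, x i ^ 2) * √(∑ i, x i ^ 2) := by
      simp only [Matrix.sub_apply]
      gcongr
    _ = _ := by ring

lemma Matrix.IsHermitian.pow_card_le_det (hS : S.IsHermitian) (hm : 0 ≤ m)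
    (hb : ∀ x, m * ∑ i, x i ^ 2 ≤ x ⬝ᵥ (S *ᵥ x)) : m ^ Fintype.card ι ≤ S.det := by
  have heig (i : ι) : m ≤ hS.eigenvalues i := by
    have hunit : ∑ j, (hS.eigenvectorBasis i : ι → ℝ) j ^ 2 = 1 := by
      rw [← EuclideanSpace.real_norm_sq_eq, hS.eigenvectorBasis.orthonormal.1 i, one_pow]
    simpa [hS.eigenvalues_eq i, hunit] using hb (hS.eigenvectorBasis i)
  rw [hS.det_eq_prod_eigenvalues, ← Finset.card_univ, ← Finset.prod_const]
  exact Finset.prod_le_prod (fun _ _ => hm) fun i _ => by simpa using heig i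

lemma exists_abs_det_sub_det_le {R : ℝ} (hR : 0 ≤ R) : ∃ C ≥ 0, ∀ A B : Matrix ι ι ℝ,
    (∀ i j, |A i j| ≤ R) → (∀ i j, |B i j| ≤ R) →
      |A.det - B.det| ≤ C * √(∑ i, ∑ j, (A i j - B i j) ^ 2) := by
  let D : ContinuousMultilinearMap ℝ (fun _ : ι => ι → ℝ) ℝ :=
    { (detRowAlternating : (ι → ℝ) [⋀^ι]→ₗ[ℝ] ℝ).toMultilinearMap with
      cont := continuous_id.matrix_det }
  refine ⟨‖D‖ * Fintype.card ι * R ^ (Fintype.card ι - 1), by positivity, fun A B hA hB => ?_⟩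
  have hnorm (A : ι → ι → ℝ) (hA : ∀ i j, |A i j| ≤ R) : ‖A‖ ≤ R := by
    simpa only [pi_norm_le_iff_of_nonneg hR, Real.norm_eq_abs] using hA
  calc |A.det - B.det| = ‖D A - D B‖ := rfl
    _ ≤ _ := D.norm_image_sub_le A B
    _ ≤ _ := by
      gcongr
      · exact le_max_of_le_left (norm_nonneg _)
      · exact max_le (hnorm A hA) (hnorm B hB)
      · simp only [pi_norm_le_iff_of_nonneg (sqrt_nonneg _), Real.norm_eq_abs]
        exact abs_le_sqrt_sum_sum_sq (A - B)

end

/-- For symmetric `S` this says that the eigenvalues of `S` lie in `[m, M]`. -/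
def QuadFormBetween {ι : Type*} [Fintype ι] (m M : ℝ) (S : Matrix ι ι ℝ) : Prop :=
  ∀ x : ι → ℝ, m * ∑ i, x i ^ 2 ≤ x ⬝ᵥ (S *ᵥ x) ∧ x ⬝ᵥ (S *ᵥ x) ≤ M * ∑ i, x i ^ 2

lemma exists_abs_det_rpow_neg_half_sub_le {ι : Type*} [Fintype ι] [DecidableEq ι] {m M : ℝ}
    (hm : 0 < m) (hM : 0 ≤ M) :
    ∃ C ≥ 0, ∀ S₁ S₂ : Matrix ι ι ℝ, S₁.PosDef → S₂.PosDef →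
      QuadFormBetween m M S₁ → QuadFormBetween m M S₂ →
      |S₁.det ^ (-(1 : ℝ) / 2) - S₂.det ^ (-(1 : ℝ) / 2)| ≤
        C * √(∑ i, ∑ j, (S₁ i j - S₂ i j) ^ 2) := by
  obtain ⟨D, hD, hdet⟩ := exists_abs_det_sub_det_le (ι := ι) hM
  set ℓ := m ^ Fintype.card ι
  have hℓ : 0 < ℓ := by positivity
  refine ⟨D / (2 * ℓ * √ℓ), by positivity, fun S₁ S₂ hS₁ hS₂ hb₁ hb₂ => ?_⟩
  calc _ ≤ |S₁.det - S₂.det| / (2 * ℓ * √ℓ) :=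
        abs_rpow_neg_half_sub_le hℓ (hS₁.isHermitian.pow_card_le_det hm.le fun x => (hb₁ x).1)
          (hS₂.isHermitian.pow_card_le_det hm.le fun x => (hb₂ x).1)
    _ ≤ D * √(∑ i, ∑ j, (S₁ i j - S₂ i j) ^ 2) / (2 * ℓ * √ℓ) := by
        gcongr
        exact hdet S₁ S₂ (hS₁.posSemidef.abs_apply_le fun x => (hb₁ x).2)
          (hS₂.posSemidef.abs_apply_le fun x => (hb₂ x).2)
    _ = _ := by ring

noncomputable def gaussianDensity {q : ℕ} (S : Matrix (Fin q) (Fin q) ℝ) (x : Fin q → ℝ) : ℝ :=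
  (2 * π) ^ (-(q : ℝ) / 2) * S.det ^ (-(1 : ℝ) / 2) * exp (-(x ⬝ᵥ (S⁻¹ *ᵥ x)) / 2)

lemma abs_gaussianDensity_sub_le {q : ℕ} {m M C : ℝ} (hm : 0 < m) (hM : 0 < M) (hC : 0 ≤ C)
    {S₁ S₂ : Matrix (Fin q) (Fin q) ℝ} (hS₁ : S₁.PosDef) (hS₂ : S₂.PosDef)
    (hb₁ : QuadFormBetween m M S₁) (hb₂ : QuadFormBetween m M S₂)
    (hdet : |S₁.det ^ (-(1 : ℝ) / 2) - S₂.det ^ (-(1 : ℝ) / 2)| ≤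
      C * √(∑ i, ∑ j, (S₁ i j - S₂ i j) ^ 2)) (x : Fin q → ℝ) :
    |gaussianDensity S₁ x - gaussianDensity S₂ x| ≤
      (2 * π) ^ (-(q : ℝ) / 2) * (C + 2 * M / m ^ 2 * (m ^ q) ^ (-(1 : ℝ) / 2)) *
        √(∑ i, ∑ j, (S₁ i j - S₂ i j) ^ 2) * exp (-((4 * M)⁻¹ * ∑ i, x i ^ 2)) := by
  set δ := √(∑ i, ∑ j, (S₁ i j - S₂ i j) ^ 2)
  set s := (4 * M)⁻¹ * ∑ i, x i ^ 2 with hs_def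
  set A := (m ^ q) ^ (-(1 : ℝ) / 2)
  have hs : 0 ≤ s := by positivity
  have hQ {S : Matrix (Fin q) (Fin q) ℝ} (hS : S.PosDef) (hb : QuadFormBetween m M S) :
      2 * s ≤ x ⬝ᵥ (S⁻¹ *ᵥ x) / 2 := by
    have := hS.div_le_dotProduct_inv_mulVec hM (fun x => (hb x).2) x
    calc 2 * s = (∑ i, x i ^ 2) / M / 2 := by rw [hs_def]; field_simp; ring
      _ ≤ _ := by linarith
  have hQdiff : |x ⬝ᵥ (S₁⁻¹ *ᵥ x) / 2 - x ⬝ᵥ (S₂⁻¹ *ᵥ x) / 2| ≤ 2 * M / m ^ 2 * δ * s := by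
    have := abs_dotProduct_inv_mulVec_sub_le hS₁ hS₂ hm (fun x => (hb₁ x).1) (fun x => (hb₂ x).1) x
    rw [← sub_div, abs_div, abs_two]
    calc _ ≤ δ * (∑ i, x i ^ 2) / m ^ 2 / 2 := by gcongr
      _ = _ := by rw [hs_def]; field_simp; ring
  have hA : S₂.det ^ (-(1 : ℝ) / 2) ≤ A := by
    refine rpow_le_rpow_of_nonpos (by positivity) ?_ (by norm_num)
    simpa using hS₂.isHermitian.pow_card_le_det hm.le fun x => (hb₂ x).1
  have hP : 0 < (2 * π) ^ (-(q : ℝ) / 2) := by positivity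
  unfold gaussianDensity
  rw [neg_div 2 (x ⬝ᵥ (S₁⁻¹ *ᵥ x)), neg_div 2 (x ⬝ᵥ (S₂⁻¹ *ᵥ x)), mul_assoc, mul_assoc,
    ← mul_sub, abs_mul, abs_of_pos hP]
  calc _ ≤ (2 * π) ^ (-(q : ℝ) / 2) * ((|S₁.det ^ (-(1 : ℝ) / 2) - S₂.det ^ (-(1 : ℝ) / 2)| +
        S₂.det ^ (-(1 : ℝ) / 2) * |x ⬝ᵥ (S₁⁻¹ *ᵥ x) / 2 - x ⬝ᵥ (S₂⁻¹ *ᵥ x) / 2|) *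
          exp (-(2 * s))) := by
        gcongr
        exact abs_mul_exp_neg_sub_mul_exp_neg_le (rpow_pos_of_pos hS₂.det_pos _).le (hQ hS₁ hb₁)
          (hQ hS₂ hb₂)
    _ ≤ (2 * π) ^ (-(q : ℝ) / 2) * ((C * δ + A * (2 * M / m ^ 2 * δ * s)) * exp (-(2 * s))) := by
        gcongr
    _ = (2 * π) ^ (-(q : ℝ) / 2) * δ * ((C + 2 * M / m ^ 2 * A * s) * exp (-(2 * s))) := by
        ring
    _ ≤ (2 * π) ^ (-(q : ℝ) / 2) * δ * ((C + 2 * M / m ^ 2 * A) * exp (-s)) :=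
        mul_le_mul_of_nonneg_left (add_mul_mul_exp_neg_two_mul_le hC (by positivity) hs)
          (by positivity)
    _ = _ := by ring

/-- Total variation bound for `q`-dimensional centered Gaussian
densities: if `S₁, S₂` are symmetric positive definite with all eigenvalues in
`[m, M] ⊂ (0,∞)` (expressed via two-sided quadratic-form bounds), then
`∫ |φ(x;S₁) − φ(x;S₂)| dx ≤ K(q,m,M) ‖S₁ − S₂‖` (Frobenius norm). -/
theorem stmt7 (q : ℕ) (m M : ℝ) (hm : 0 < m) (hmM : m ≤ M) :
    ∃ K > (0 : ℝ), ∀ S₁ S₂ : Matrix (Fin q) (Fin q) ℝ,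
      S₁.IsSymm → S₂.IsSymm → S₁.PosDef → S₂.PosDef →
      (∀ x : Fin q → ℝ, m * ∑ i, x i ^ 2 ≤ x ⬝ᵥ (S₁ *ᵥ x) ∧
        x ⬝ᵥ (S₁ *ᵥ x) ≤ M * ∑ i, x i ^ 2) →
      (∀ x : Fin q → ℝ, m * ∑ i, x i ^ 2 ≤ x ⬝ᵥ (S₂ *ᵥ x) ∧
        x ⬝ᵥ (S₂ *ᵥ x) ≤ M * ∑ i, x i ^ 2) →
      (∫ x : Fin q → ℝ,
        |(2 * π) ^ (-(q : ℝ) / 2) * S₁.det ^ (-(1 : ℝ) / 2) *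
            Real.exp (-(x ⬝ᵥ (S₁⁻¹ *ᵥ x)) / 2) -
          (2 * π) ^ (-(q : ℝ) / 2) * S₂.det ^ (-(1 : ℝ) / 2) *
            Real.exp (-(x ⬝ᵥ (S₂⁻¹ *ᵥ x)) / 2)|) ≤
        K * Real.sqrt (∑ i, ∑ j, (S₁ i j - S₂ i j) ^ 2) := by
  have hM : 0 < M := hm.trans_le hmM
  obtain ⟨C, hC, hdet⟩ := exists_abs_det_rpow_neg_half_sub_le (ι := Fin q) hm hM.le
  have hint := integrable_exp_neg_mul_sum_sq (ι := Fin q) (inv_pos.2 (by positivity : 0 < 4 * M))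
  have hK₀ : 0 < (2 * π) ^ (-(q : ℝ) / 2) * (C + 2 * M / m ^ 2 * (m ^ q) ^ (-(1 : ℝ) / 2)) := by
    positivity
  refine ⟨_ * ∫ x : Fin q → ℝ, exp (-((4 * M)⁻¹ * ∑ i, x i ^ 2)),
    mul_pos hK₀ (integral_exp_pos hint), fun S₁ S₂ _ _ hS₁ hS₂ hb₁ hb₂ => ?_⟩
  calc ∫ x, |gaussianDensity S₁ x - gaussianDensity S₂ x|
      ≤ ∫ x, _ * √(∑ i, ∑ j, (S₁ i j - S₂ i j) ^ 2) * exp (-((4 * M)⁻¹ * ∑ i, x i ^ 2)) :=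
        integral_mono_of_nonneg (ae_of_all _ fun _ => abs_nonneg _) (hint.const_mul _)
          (ae_of_all _ (abs_gaussianDensity_sub_le hm hM hC hS₁ hS₂ hb₁ hb₂
            (hdet S₁ S₂ hS₁ hS₂ hb₁ hb₂)))
    _ = _ := by rw [integral_const_mul]; ring
end

section
/- Let W = n^{−1/2} ∑_{i=1}^n x_i ε_i with ε_1,…,ε_n i.i.d. mean-zero random variables with E|ε₁|^r < ∞ for some integer r ≥ 3, and suppose max_j n^{−1}∑_{i=1}^n |x_{i,j}|^r ≤ M. Then there is K ∈ (0,∞) such that P(‖W‖_∞ > K√(log n)) = O(p · n^{−(r−2)/2}). -/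
/-!
Fuk–Nagaev truncation, coordinate by coordinate. Write `W_j = ∑ᵢ bᵢ εᵢ` with
`bᵢ = n^{-1/2} x_{ij}`. The event `W_j > t` lies in the union of the events `bᵢεᵢ > y`, whose
probabilities add up to at most `∑ᵢ E|bᵢεᵢ|^r / y^r` (Markov), and of the event
`∑ᵢ min(bᵢεᵢ, y) ≥ t`, which Chernoff's bound controls: the Taylor bound
`e^v ≤ 1 + v + v²/2 + |v|³ e^{θy}` for `v ≤ θy` gives
`E e^{θ min(X, y)} ≤ exp(θ² E X²/2 + e^{θy} θ³ E|X|³)` for centred `X`.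

Take `t = K √log n`, `θ = √log n / a`, `y = a √log n / 4` and `K = r a / 2`, so that
`θy = (log n)/4` and `θt = (r/2) log n`, with `a` so large that `θ² ∑ E(bᵢεᵢ)²/2 ≤ log n`.
Since `∑ᵢ |bᵢ|^k = O(n^{1-k/2})`, the Markov term is `O(n^{1-r/2})`, and the Chernoff exponent
is at most `-(r/2) log n + log n + O((log n)^{3/2} n^{1/4-1/2})`, so the Chernoff term is
`O(n^{1-r/2})` too. A union bound over the `p` coordinates and both signs concludes.
-/

open MeasureTheory ProbabilityTheory Filter Asymptotics Finset Real

lemma exp_le_quadratic_add_abs_cube_mul_exp {v a : ℝ} (hva : v ≤ a) (ha : 0 ≤ a) :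
    exp v ≤ 1 + v + v ^ 2 / 2 + |v| ^ 3 * exp a := by
  rcases le_or_gt |v| 1 with hv | hv
  · have htaylor := Real.exp_bound hv (n := 3) (by norm_num)
    norm_num [Finset.sum_range_succ, Nat.factorial] at htaylor
    nlinarith [(abs_le.1 htaylor).2, pow_nonneg (abs_nonneg v) 3, one_le_exp ha]
  rcases lt_abs.1 hv with hv | hv
  · have hcube : 1 ≤ |v| ^ 3 := one_le_pow₀ (by rw [abs_of_pos (by linarith)]; linarith)
    nlinarith [exp_le_exp.2 hva, exp_pos a]
  · -- `exp v < exp (-1) < 1 / 2 ≤ ((1 + v) ^ 2 + 1) / 2`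
    have he : 2 < exp 1 := lt_trans (by norm_num) exp_one_gt_d9
    have hv1 : exp v * exp 1 < 1 := by
      rw [← exp_add, exp_lt_one_iff]; linarith
    nlinarith [pow_nonneg (abs_nonneg v) 3, exp_pos v, exp_pos a]

lemma abs_min_le_abs {x y : ℝ} (hy : 0 ≤ y) : |min x y| ≤ |x| :=
  abs_le.2 ⟨le_min (neg_abs_le x) ((neg_nonpos.2 (abs_nonneg x)).trans hy),
    (min_le_left x y).trans (le_abs_self x)⟩

lemma pow_le_one_add_pow_of_le {x : ℝ} (hx : 0 ≤ x) {k r : ℕ} (hk : k ≤ r) : x ^ k ≤ 1 + x ^ r := by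
  rcases le_total x 1 with h | h
  · linarith [pow_le_one₀ hx h (n := k), pow_nonneg hx r]
  · linarith [pow_le_pow_right₀ h hk]

/-- `Bᵣ / y ^ r` bounds the summands exceeding `y` (Markov), the exponential bounds the sum of
the summands truncated at `y` (Chernoff at `θ`); `B₂`, `B₃`, `Bᵣ` stand for the summed second,
third and `r`-th absolute moments. -/
noncomputable def fukNagaevBound (r : ℕ) (t θ y B₂ B₃ Bᵣ : ℝ) : ℝ :=
  Bᵣ / y ^ r + exp (-θ * t + θ ^ 2 * B₂ / 2 + exp (θ * y) * θ ^ 3 * B₃)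

lemma fukNagaevBound_mono {r : ℕ} {t θ y B₂ B₃ Bᵣ B₂' B₃' Bᵣ' : ℝ} (hθ : 0 ≤ θ) (hy : 0 ≤ y)
    (h₂ : B₂ ≤ B₂') (h₃ : B₃ ≤ B₃') (hᵣ : Bᵣ ≤ Bᵣ') :
    fukNagaevBound r t θ y B₂ B₃ Bᵣ ≤ fukNagaevBound r t θ y B₂' B₃' Bᵣ' := by
  unfold fukNagaevBound
  gcongr

section Probability

variable {Ω : Type*} [MeasurableSpace Ω] {P : Measure Ω} [IsProbabilityMeasure P]

lemma mgf_min_le_exp {X : Ω → ℝ} (hX : Measurable X) (hmean : ∫ ω, X ω ∂P = 0)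
    (h3 : Integrable (fun ω => |X ω| ^ 3) P) {θ y : ℝ} (hθ : 0 ≤ θ) (hy : 0 < y) :
    mgf (fun ω => min (X ω) y) P θ ≤
      exp (θ ^ 2 * (∫ ω, X ω ^ 2 ∂P) / 2 + exp (θ * y) * θ ^ 3 * ∫ ω, |X ω| ^ 3 ∂P) := by
  have h3' : Integrable (fun ω => ‖X ω‖ ^ 3) P := by simpa using h3
  have h1 : Integrable X P := by
    refine (integrable_norm_iff hX.aestronglyMeasurable).1 ?_
    simpa using integrable_norm_pow_of_le hX.aestronglyMeasurable (by norm_num : 1 ≤ 3) h3'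
  have h2 : Integrable (fun ω => X ω ^ 2) P := by
    simpa using integrable_norm_pow_of_le hX.aestronglyMeasurable (by norm_num : 2 ≤ 3) h3'
  have hpointwise : ∀ ω, exp (θ * min (X ω) y) ≤
      1 + θ * X ω + θ ^ 2 / 2 * X ω ^ 2 + exp (θ * y) * θ ^ 3 * |X ω| ^ 3 := by
    intro ω
    have hm := abs_min_le_abs (x := X ω) hy.le
    have hm2 : min (X ω) y ^ 2 ≤ X ω ^ 2 := sq_le_sq.2 hm
    have hm3 : |min (X ω) y| ^ 3 ≤ |X ω| ^ 3 := pow_le_pow_left₀ (abs_nonneg _) hm 3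
    have hmX : min (X ω) y ≤ X ω := min_le_left _ _
    refine (exp_le_quadratic_add_abs_cube_mul_exp
      (mul_le_mul_of_nonneg_left (min_le_right _ _) hθ) (by positivity)).trans ?_
    rw [mul_pow, abs_mul, mul_pow, abs_of_nonneg hθ]
    have := mul_le_mul_of_nonneg_left hm3 (by positivity : 0 ≤ θ ^ 3 * exp (θ * y))
    nlinarith [mul_le_mul_of_nonneg_left hmX hθ, mul_le_mul_of_nonneg_left hm2 (sq_nonneg θ)]
  have hintegral : ∫ ω, (1 + θ * X ω + θ ^ 2 / 2 * X ω ^ 2 + exp (θ * y) * θ ^ 3 * |X ω| ^ 3) ∂P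
      = 1 + (θ ^ 2 * (∫ ω, X ω ^ 2 ∂P) / 2 + exp (θ * y) * θ ^ 3 * ∫ ω, |X ω| ^ 3 ∂P) := by
    rw [integral_add, integral_add, integral_add, integral_const_mul, integral_const_mul,
      integral_const_mul, hmean]
    · simp only [integral_const, probReal_univ, smul_eq_mul, one_mul, mul_zero, add_zero]
      ring
    all_goals fun_prop
  calc mgf (fun ω => min (X ω) y) P θ
      ≤ ∫ ω, (1 + θ * X ω + θ ^ 2 / 2 * X ω ^ 2 + exp (θ * y) * θ ^ 3 * |X ω| ^ 3) ∂P :=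
        integral_mono_of_nonneg (ae_of_all _ fun ω => (exp_pos _).le) (by fun_prop)
          (ae_of_all _ hpointwise)
    _ ≤ _ := by rw [hintegral]; exact add_one_le_exp _ |>.trans_eq' (add_comm _ _)

lemma measureReal_gt_le_integral_abs_pow_div {X : Ω → ℝ} (r : ℕ)
    (hr : Integrable (fun ω => |X ω| ^ r) P) {y : ℝ} (hy : 0 < y) :
    P.real {ω | y < X ω} ≤ (∫ ω, |X ω| ^ r ∂P) / y ^ r := by
  have hmarkov := mul_meas_ge_le_integral_of_nonneg (ae_of_all _ fun ω => by positivity) hr (y ^ r)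
  rw [le_div_iff₀ (by positivity), mul_comm]
  refine le_trans (mul_le_mul_of_nonneg_left (measureReal_mono fun ω hω => ?_) (by positivity))
    hmarkov
  exact pow_le_pow_left₀ hy.le (hω.le.trans (le_abs_self _)) r

lemma measureReal_ge_sum_min_le {ι : Type*} {X : ι → Ω → ℝ} (hX : ∀ i, Measurable (X i))
    (hindep : iIndepFun X P) (hmean : ∀ i, ∫ ω, X i ω ∂P = 0)
    (h3 : ∀ i, Integrable (fun ω => |X i ω| ^ 3) P) (s : Finset ι) (t : ℝ) {θ y : ℝ}
    (hθ : 0 ≤ θ) (hy : 0 < y) :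
    P.real {ω | t ≤ ∑ i ∈ s, min (X i ω) y} ≤ exp (-θ * t + ∑ i ∈ s,
      (θ ^ 2 * (∫ ω, X i ω ^ 2 ∂P) / 2 + exp (θ * y) * θ ^ 3 * ∫ ω, |X i ω| ^ 3 ∂P)) := by
  set Y : ι → Ω → ℝ := fun i ω => min (X i ω) y
  have hY : ∀ i, Measurable (Y i) := fun i => (hX i).min measurable_const
  have hYindep : iIndepFun Y P :=
    hindep.comp (fun _ x => min x y) fun _ => measurable_id.min measurable_const
  have hsum : (fun ω => ∑ i ∈ s, Y i ω) = ∑ i ∈ s, Y i := by ext ω; simp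
  have hchernoff := measure_ge_le_exp_mul_mgf (μ := P) t hθ (integrable_exp_mul_of_le θ (#s * y) hθ
    (Finset.measurable_sum s fun i _ => hY i).aemeasurable
    (ae_of_all _ fun ω => (Finset.sum_le_sum fun i _ => min_le_right (X i ω) y).trans_eq (by simp)))
  rw [hsum, hYindep.mgf_sum hY] at hchernoff
  refine hchernoff.trans ?_
  rw [exp_add, exp_sum]
  gcongr with i
  · exact fun i _ => mgf_nonneg
  · exact mgf_min_le_exp (hX i) (hmean i) (h3 i) hθ hy

lemma measureReal_lt_sum_le_fukNagaevBound {ι : Type*} {X : ι → Ω → ℝ}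
    (hX : ∀ i, Measurable (X i)) (hindep : iIndepFun X P) (hmean : ∀ i, ∫ ω, X i ω ∂P = 0)
    {r : ℕ} (hr : 3 ≤ r) (hmom : ∀ i, Integrable (fun ω => |X i ω| ^ r) P) (s : Finset ι)
    (t : ℝ) {θ y : ℝ} (hθ : 0 ≤ θ) (hy : 0 < y) :
    P.real {ω | t < ∑ i ∈ s, X i ω} ≤ fukNagaevBound r t θ y (∑ i ∈ s, ∫ ω, X i ω ^ 2 ∂P)
      (∑ i ∈ s, ∫ ω, |X i ω| ^ 3 ∂P) (∑ i ∈ s, ∫ ω, |X i ω| ^ r ∂P) := by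
  have h3 : ∀ i, Integrable (fun ω => |X i ω| ^ 3) P := fun i => by
    simpa using integrable_norm_pow_of_le (hX i).aestronglyMeasurable hr (by simpa using hmom i)
  have hsub : {ω | t < ∑ i ∈ s, X i ω} ⊆
      (⋃ i ∈ s, {ω | y < X i ω}) ∪ {ω | t ≤ ∑ i ∈ s, min (X i ω) y} := by
    intro ω hω
    by_cases hbig : ∃ i ∈ s, y < X i ω
    · obtain ⟨i, hi, hyi⟩ := hbig
      exact Or.inl (Set.mem_biUnion hi hyi)
    · push Not at hbig
      exact Or.inr (hω.le.trans_eq (sum_congr rfl fun i hi => (min_eq_left (hbig i hi)).symm))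
  calc P.real {ω | t < ∑ i ∈ s, X i ω}
      ≤ ∑ i ∈ s, P.real {ω | y < X i ω} + P.real {ω | t ≤ ∑ i ∈ s, min (X i ω) y} :=
        (measureReal_mono hsub).trans ((measureReal_union_le _ _).trans
          (add_le_add_left (measureReal_biUnion_finset_le _ _) _))
    _ ≤ ∑ i ∈ s, (∫ ω, |X i ω| ^ r ∂P) / y ^ r + exp (-θ * t + ∑ i ∈ s,
          (θ ^ 2 * (∫ ω, X i ω ^ 2 ∂P) / 2 + exp (θ * y) * θ ^ 3 * ∫ ω, |X i ω| ^ 3 ∂P)) :=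
        add_le_add (sum_le_sum fun i _ => measureReal_gt_le_integral_abs_pow_div r (hmom i) hy)
          (measureReal_ge_sum_min_le hX hindep hmean h3 s t hθ hy)
    _ = _ := by
        simp only [fukNagaevBound, sum_add_distrib, ← sum_div, ← mul_sum, add_assoc]

lemma measureReal_lt_abs_sum_le_fukNagaevBound {ι : Type*} {X : ι → Ω → ℝ}
    (hX : ∀ i, Measurable (X i)) (hindep : iIndepFun X P) (hmean : ∀ i, ∫ ω, X i ω ∂P = 0)
    {r : ℕ} (hr : 3 ≤ r) (hmom : ∀ i, Integrable (fun ω => |X i ω| ^ r) P) (s : Finset ι)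
    (t : ℝ) {θ y : ℝ} (hθ : 0 ≤ θ) (hy : 0 < y) :
    P.real {ω | t < |∑ i ∈ s, X i ω|} ≤ 2 * fukNagaevBound r t θ y (∑ i ∈ s, ∫ ω, X i ω ^ 2 ∂P)
      (∑ i ∈ s, ∫ ω, |X i ω| ^ 3 ∂P) (∑ i ∈ s, ∫ ω, |X i ω| ^ r ∂P) := by
  have hsub : {ω | t < |∑ i ∈ s, X i ω|} ⊆
      {ω | t < ∑ i ∈ s, X i ω} ∪ {ω | t < ∑ i ∈ s, -X i ω} := by
    intro ω (hω : t < |_|)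
    simpa only [Set.mem_union, Set.mem_ofPred_eq, sum_neg_distrib] using lt_abs.1 hω
  have hneg := measureReal_lt_sum_le_fukNagaevBound (X := fun i ω => -X i ω)
    (fun i => (hX i).neg) (hindep.comp (fun _ => Neg.neg) fun _ => measurable_neg)
    (fun i => by rw [integral_neg, hmean i, neg_zero]) hr (by simpa using hmom) s t hθ hy
  simp only [neg_sq, abs_neg] at hneg
  linarith [(measureReal_mono (μ := P) hsub).trans (measureReal_union_le _ _),
    measureReal_lt_sum_le_fukNagaevBound hX hindep hmean hr hmom s t hθ hy]

lemma measureReal_lt_abs_weighted_sum_le {ι : Type*} {ε : ι → Ω → ℝ} {ξ : Ω → ℝ}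
    (hmeas : ∀ i, Measurable (ε i)) (hindep : iIndepFun ε P)
    (hident : ∀ i, IdentDistrib (ε i) ξ P P) (hmean : ∫ ω, ξ ω ∂P = 0) {r : ℕ} (hr : 3 ≤ r)
    (hmom : Integrable (fun ω => |ξ ω| ^ r) P) (s : Finset ι) (b : ι → ℝ) (t : ℝ) {θ y : ℝ}
    (hθ : 0 ≤ θ) (hy : 0 < y) :
    P.real {ω | t < |∑ i ∈ s, b i * ε i ω|} ≤ 2 * fukNagaevBound r t θ y
      ((∫ ω, ξ ω ^ 2 ∂P) * ∑ i ∈ s, b i ^ 2) ((∫ ω, |ξ ω| ^ 3 ∂P) * ∑ i ∈ s, |b i| ^ 3)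
      ((∫ ω, |ξ ω| ^ r ∂P) * ∑ i ∈ s, |b i| ^ r) := by
  have hmoment : ∀ i (g : ℝ → ℝ), Measurable g → ∫ ω, g (ε i ω) ∂P = ∫ ω, g (ξ ω) ∂P :=
    fun i _ hg => ((hident i).comp hg).integral_eq
  have h2 : ∀ i, ∫ ω, ε i ω ^ 2 ∂P = ∫ ω, ξ ω ^ 2 ∂P :=
    fun i => hmoment i (fun x => x ^ 2) (by fun_prop)
  have habs : ∀ i (k : ℕ), ∫ ω, |ε i ω| ^ k ∂P = ∫ ω, |ξ ω| ^ k ∂P :=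
    fun i k => hmoment i (fun x => |x| ^ k) (by fun_prop)
  have hmom' : ∀ i, Integrable (fun ω => |b i * ε i ω| ^ r) P := fun i => by
    simp_rw [abs_mul, mul_pow]
    exact (((hident i).comp (measurable_id.abs.pow_const r)).integrable_iff.2 hmom).const_mul _
  have h := measureReal_lt_abs_sum_le_fukNagaevBound (X := fun i ω => b i * ε i ω)
    (fun i => (hmeas i).const_mul (b i))
    (hindep.comp (fun i x => b i * x) fun i => measurable_const_mul (b i))
    (fun i => by rw [integral_const_mul, (hident i).integral_eq, hmean, mul_zero])
    hr hmom' s t hθ hy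
  simp_rw [abs_mul, mul_pow, integral_const_mul, h2, habs] at h
  simpa only [mul_sum, mul_comm] using h

lemma sum_abs_rpow_neg_half_mul_pow_le {n : ℕ} (hn : 0 < n) (u : Fin n → ℝ) {k r : ℕ}
    (hk : k ≤ r) {M : ℝ} (hM : (n : ℝ)⁻¹ * ∑ i, |u i| ^ r ≤ M) :
    ∑ i, |(n : ℝ) ^ (-(1 : ℝ) / 2) * u i| ^ k ≤ (1 + |M|) * (n : ℝ) ^ (1 - (k : ℝ) / 2) := by
  have hn' : (0 : ℝ) < n := by exact_mod_cast hn
  have hsum : ∑ i, |u i| ^ k ≤ n * (1 + |M|) := by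
    have hr : ∑ i, |u i| ^ r ≤ n * M := by rwa [inv_mul_le_iff₀ hn'] at hM
    calc ∑ i, |u i| ^ k ≤ ∑ i, (1 + |u i| ^ r) :=
          sum_le_sum fun i _ => pow_le_one_add_pow_of_le (abs_nonneg _) hk
      _ = n + ∑ i, |u i| ^ r := by simp [sum_add_distrib]
      _ ≤ n * (1 + |M|) := by nlinarith [le_abs_self M]
  have hscale : ∀ i,
      |(n : ℝ) ^ (-(1 : ℝ) / 2) * u i| ^ k = (n : ℝ) ^ (-(k : ℝ) / 2) * |u i| ^ k := by
    intro i
    rw [abs_mul, mul_pow, abs_of_nonneg (rpow_nonneg hn'.le _), ← rpow_natCast, ← rpow_mul hn'.le]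
    ring_nf
  calc ∑ i, |(n : ℝ) ^ (-(1 : ℝ) / 2) * u i| ^ k = (n : ℝ) ^ (-(k : ℝ) / 2) * ∑ i, |u i| ^ k := by
        simp only [hscale, mul_sum]
    _ ≤ (n : ℝ) ^ (-(k : ℝ) / 2) * (n * (1 + |M|)) := by gcongr
    _ = (1 + |M|) * (n : ℝ) ^ (1 - (k : ℝ) / 2) := by
        rw [sub_eq_neg_add, rpow_add hn', rpow_one, neg_div]; ring

lemma measureReal_lt_abs_design_sum_le {ε : ℕ → Ω → ℝ} {ξ : Ω → ℝ}
    (hmeas : ∀ i, Measurable (ε i)) (hindep : iIndepFun ε P)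
    (hident : ∀ i, IdentDistrib (ε i) ξ P P) (hmean : ∫ ω, ξ ω ∂P = 0) {r : ℕ} (hr : 3 ≤ r)
    (hmom : Integrable (fun ω => |ξ ω| ^ r) P) {n : ℕ} (hn : 0 < n) (u : Fin n → ℝ) {M : ℝ}
    (hM : (n : ℝ)⁻¹ * ∑ i, |u i| ^ r ≤ M) (t : ℝ) {θ y : ℝ} (hθ : 0 ≤ θ) (hy : 0 < y) :
    P.real {ω | t < |(n : ℝ) ^ (-(1 : ℝ) / 2) * ∑ i : Fin n, u i * ε i ω|} ≤
      2 * fukNagaevBound r t θ y ((∫ ω, ξ ω ^ 2 ∂P) * (1 + |M|))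
        ((∫ ω, |ξ ω| ^ 3 ∂P) * (1 + |M|) * (n : ℝ) ^ (-(1 / 2 : ℝ)))
        ((∫ ω, |ξ ω| ^ r ∂P) * (1 + |M|) * (n : ℝ) ^ (-((r : ℝ) - 2) / 2)) := by
  have h₂ := sum_abs_rpow_neg_half_mul_pow_le hn u (by omega : 2 ≤ r) hM
  have h₃ := sum_abs_rpow_neg_half_mul_pow_le hn u hr hM
  have hᵣ := sum_abs_rpow_neg_half_mul_pow_le hn u le_rfl hM
  rw [show 1 - ((2 : ℕ) : ℝ) / 2 = 0 by norm_num, rpow_zero, mul_one] at h₂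
  rw [show 1 - ((3 : ℕ) : ℝ) / 2 = -(1 / 2) by norm_num] at h₃
  simp_rw [sq_abs] at h₂
  rw [show 1 - (r : ℝ) / 2 = -((r : ℝ) - 2) / 2 by ring] at hᵣ
  simp_rw [mul_sum, ← mul_assoc]
  refine (measureReal_lt_abs_weighted_sum_le (ε := fun i : Fin n => ε i) (fun i => hmeas i)
    (hindep.precomp Fin.val_injective) (fun i => hident i) hmean hr hmom univ _ t hθ hy).trans ?_
  gcongr 2 * ?_
  refine fukNagaevBound_mono hθ hy.le ?_ ?_ ?_
  · exact mul_le_mul_of_nonneg_left h₂ (by positivity)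
  · exact (mul_le_mul_of_nonneg_left h₃ (by positivity)).trans_eq (mul_assoc _ _ _).symm
  · exact (mul_le_mul_of_nonneg_left hᵣ (by positivity)).trans_eq (mul_assoc _ _ _).symm

end Probability

lemma tendsto_sqrt_log_pow_mul_rpow_neg (k : ℕ) {c : ℝ} (hc : 0 < c) :
    Tendsto (fun x : ℝ => √(log x) ^ k * x ^ (-c)) atTop (nhds 0) := by
  refine ((isLittleO_log_rpow_rpow_atTop (k / 2) hc).tendsto_div_nhds_zero).congr' ?_
  filter_upwards [eventually_ge_atTop 1] with x hx
  rw [sqrt_eq_rpow, ← rpow_natCast, ← rpow_mul (log_nonneg hx), rpow_neg (by linarith),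
    div_eq_mul_inv]
  ring_nf

lemma fukNagaevBound_sqrt_log_le {r : ℕ} {V D₃ Dᵣ a x : ℝ} (ha : 0 < a) (hVa : V ≤ 2 * a ^ 2)
    (hDᵣ : 0 ≤ Dᵣ) (hx₀ : 0 < x) (hx : 1 ≤ log x)
    (hsmall : D₃ / a ^ 3 * √(log x) ^ 3 * x ^ (-(1 / 4 : ℝ)) ≤ 1) :
    fukNagaevBound r (r * a / 2 * √(log x)) (√(log x) / a) (a * √(log x) / 4) V
        (D₃ * x ^ (-(1 / 2 : ℝ))) (Dᵣ * x ^ (-((r : ℝ) - 2) / 2)) ≤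
      (Dᵣ / (a / 4) ^ r + exp 1) * x ^ (-((r : ℝ) - 2) / 2) := by
  simp only [rpow_def_of_pos hx₀] at hsmall ⊢
  set L := log x
  set s := √L
  have hs : 1 ≤ s := one_le_sqrt.2 hx
  have hsL : s ^ 2 = L := sq_sqrt (by linarith)
  have hθy : s / a * (a * s / 4) = L / 4 := by field_simp; linear_combination hsL
  have hθt : -(s / a) * (r * a / 2 * s) = -(r * L / 2) := by field_simp; linear_combination -r * hsL
  have hquad : (s / a) ^ 2 * V / 2 ≤ L := by
    rw [div_pow, ← hsL, div_mul_eq_mul_div, div_div, div_le_iff₀ (by positivity)]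
    nlinarith [sq_nonneg s]
  have hcubic : exp (s / a * (a * s / 4)) * (s / a) ^ 3 * (D₃ * exp (L * -(1 / 2))) ≤ 1 := by
    refine le_of_eq_of_le ?_ hsmall
    have hexp : exp (L / 4) * exp (L * -(1 / 2)) = exp (L * -(1 / 4)) := by
      rw [← exp_add]; ring_nf
    rw [hθy, ← hexp]
    ring
  rw [fukNagaevBound, add_mul, mul_div_right_comm]
  gcongr ?_ + ?_
  · gcongr
    nlinarith
  · rw [← exp_add]
    exact exp_le_exp.2 (by linarith)

lemma exists_fukNagaevBound_sqrt_log_le {r : ℕ} (hr : 0 < r) (V D₃ : ℝ) {Dᵣ : ℝ}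
    (hDᵣ : 0 ≤ Dᵣ) :
    ∃ K > 0, ∃ C, ∀ᶠ n : ℕ in atTop, ∃ θ > 0, ∃ y > 0,
      fukNagaevBound r (K * √(log n)) θ y V (D₃ * (n : ℝ) ^ (-(1 / 2 : ℝ)))
        (Dᵣ * (n : ℝ) ^ (-((r : ℝ) - 2) / 2)) ≤ C * (n : ℝ) ^ (-((r : ℝ) - 2) / 2) := by
  set a := 1 + |V|
  have ha : 0 < a := by positivity
  have hVa : V ≤ 2 * a ^ 2 := by nlinarith [le_abs_self V, abs_nonneg V]
  have hsmall : ∀ᶠ n : ℕ in atTop, D₃ / a ^ 3 * √(log n) ^ 3 * (n : ℝ) ^ (-(1 / 4 : ℝ)) ≤ 1 := by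
    have h := (tendsto_sqrt_log_pow_mul_rpow_neg 3 (by norm_num : (0 : ℝ) < 1 / 4)).const_mul
      (D₃ / a ^ 3)
    rw [mul_zero] at h
    filter_upwards [(h.comp tendsto_natCast_atTop_atTop).eventually_le_const one_pos] with n hn
    simpa [mul_assoc] using hn
  refine ⟨r * a / 2, by positivity, Dᵣ / (a / 4) ^ r + exp 1, ?_⟩
  filter_upwards [hsmall, eventually_gt_atTop 0,
    (tendsto_log_atTop.comp tendsto_natCast_atTop_atTop).eventually_ge_atTop 1]
    with n hsmall hn hlog
  have hs : 0 < √(log n) := sqrt_pos.2 (by simp at hlog; linarith)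
  refine ⟨√(log n) / a, by positivity, a * √(log n) / 4, by positivity, ?_⟩
  exact fukNagaevBound_sqrt_log_le ha hVa hDᵣ (by exact_mod_cast hn) hlog hsmall

/-- For `W_n = n^{-1/2} ∑ᵢ xᵢ εᵢ` with i.i.d. mean-zero errors
having `E|ε₁|^r < ∞` (`r ≥ 3`), and designs with
`max_j n⁻¹ ∑ᵢ |x_{i,j}|^r ≤ M`, there is `K > 0` with
`P(‖W_n‖_∞ > K √(log n)) = O(p_n ⋅ n^{-(r-2)/2})`. -/
theorem stmt8 {Ω : Type*} [MeasurableSpace Ω] (P : Measure Ω)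
    [IsProbabilityMeasure P]
    (ε : ℕ → Ω → ℝ) (hmeas : ∀ i, Measurable (ε i))
    (hindep : iIndepFun ε P)
    (hident : ∀ i, IdentDistrib (ε i) (ε 0) P P)
    (hmean : ∫ ω, ε 0 ω ∂P = 0)
    (r : ℕ) (hr : 3 ≤ r)
    (hmom : Integrable (fun ω => |ε 0 ω| ^ r) P)
    (p : ℕ → ℕ) (x : ∀ n : ℕ, Fin n → Fin (p n) → ℝ) (M : ℝ)
    (hx : ∀ n : ℕ, 0 < n → ∀ j : Fin (p n),
      (n : ℝ)⁻¹ * ∑ i : Fin n, |x n i j| ^ r ≤ M) :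
    ∃ K > (0 : ℝ),
      (fun n : ℕ =>
          (P {ω | ∃ j : Fin (p n),
            K * Real.sqrt (Real.log n) <
              |(n : ℝ) ^ (-(1 : ℝ) / 2) *
                ∑ i : Fin n, x n i j * ε i ω|}).toReal)
        =O[atTop] fun n : ℕ => (p n : ℝ) * (n : ℝ) ^ (-((r : ℝ) - 2) / 2) := by
  obtain ⟨K, hK, C, hC⟩ := exists_fukNagaevBound_sqrt_log_le (by omega : 0 < r)
    ((∫ ω, ε 0 ω ^ 2 ∂P) * (1 + |M|)) ((∫ ω, |ε 0 ω| ^ 3 ∂P) * (1 + |M|))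
    (Dᵣ := (∫ ω, |ε 0 ω| ^ r ∂P) * (1 + |M|)) (by positivity)
  refine ⟨K, hK, isBigO_iff.2 ⟨2 * C, ?_⟩⟩
  filter_upwards [hC, eventually_gt_atTop 0] with n ⟨θ, hθ, y, hy, hbound⟩ hn
  have hcoord : ∀ j : Fin (p n), P.real {ω | K * √(log n) <
      |(n : ℝ) ^ (-(1 : ℝ) / 2) * ∑ i : Fin n, x n i j * ε i ω|} ≤
        2 * C * (n : ℝ) ^ (-((r : ℝ) - 2) / 2) := fun j =>
    (measureReal_lt_abs_design_sum_le hmeas hindep hident hmean hr hmom hn (fun i => x n i j)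
      (hx n hn j) _ hθ.le hy).trans (by linarith)
  calc ‖(P {ω | ∃ j : Fin (p n), K * √(log n) <
          |(n : ℝ) ^ (-(1 : ℝ) / 2) * ∑ i : Fin n, x n i j * ε i ω|}).toReal‖
      = P.real (⋃ j : Fin (p n), {ω | K * √(log n) <
          |(n : ℝ) ^ (-(1 : ℝ) / 2) * ∑ i : Fin n, x n i j * ε i ω|}) := by
        rw [norm_of_nonneg ENNReal.toReal_nonneg, Set.ofPred_exists, measureReal_def]
    _ ≤ ∑ j : Fin (p n), 2 * C * (n : ℝ) ^ (-((r : ℝ) - 2) / 2) :=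
        (measureReal_iUnion_fintype_le _).trans (sum_le_sum fun j _ => hcoord j)
    _ = 2 * C * ‖(p n : ℝ) * (n : ℝ) ^ (-((r : ℝ) - 2) / 2)‖ := by
        rw [sum_const, card_univ, Fintype.card_fin, nsmul_eq_mul,
          norm_of_nonneg (by positivity)]
        ring
end

section
/- If a sequence of probability measures μ_n on ℝ^q satisfies sup_{B∈𝒞_q}|μ_n(B) − Φ(B;Σ_n)| ≤ c_n, then for any other covariance sequence Σ'_n with ‖Σ_n − Σ'_n‖ ≤ d_n and eigenvalues of both Σ_n and Σ'_n bounded in [m,M]⊂(0,∞), sup_{B∈𝒞_q}|μ_n(B) − Φ(B;Σ'_n)| ≤ c_n + K(q,m,M) d_n. -/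
set_option maxHeartbeats 1000000

open Matrix MeasureTheory Real Finset

-- scalar lemmas
lemma exp_diff_le {a b c : ℝ} (ha : c ≤ a) (hb : c ≤ b) :
    |Real.exp (-a) - Real.exp (-b)| ≤ |a - b| * Real.exp (-c) := by
  wlog h : a ≤ b generalizing a b
  · rw [abs_sub_comm, abs_sub_comm a b]; exact this hb ha (le_of_not_ge h)
  have h1 : Real.exp (-b) ≤ Real.exp (-a) := Real.exp_le_exp.2 (by linarith)
  rw [abs_of_nonneg (by linarith), abs_of_nonpos (by linarith)]
  have h2 : Real.exp (-a) - Real.exp (-b) = Real.exp (-a) * (1 - Real.exp (-(b-a))) := by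
    rw [mul_sub, mul_one, ← Real.exp_add]; ring_nf
  rw [h2]
  have h3 : 1 - Real.exp (-(b-a)) ≤ b - a := by
    have := Real.add_one_le_exp (-(b-a)); linarith
  have h4 : Real.exp (-a) ≤ Real.exp (-c) := Real.exp_le_exp.2 (by linarith)
  have h5 : 0 ≤ 1 - Real.exp (-(b-a)) := by
    have : Real.exp (-(b-a)) ≤ 1 := Real.exp_le_one_iff.2 (by linarith)
    linarith
  calc Real.exp (-a) * (1 - Real.exp (-(b-a))) ≤ Real.exp (-c) * (b - a) :=
        mul_le_mul h4 h3 h5 (Real.exp_nonneg _)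
    _ = -(a-b) * Real.exp (-c) := by ring

lemma rpow_neg_half_eq {x : ℝ} (hx : 0 < x) : x ^ (-(1:ℝ)/2) = (Real.sqrt x)⁻¹ := by
  rw [Real.sqrt_eq_rpow, ← Real.rpow_neg hx.le]
  norm_num

lemma rpow_neg_half_le {δ x : ℝ} (hδ : 0 < δ) (hx : δ ≤ x) :
    x ^ (-(1:ℝ)/2) ≤ (Real.sqrt δ)⁻¹ := by
  rw [rpow_neg_half_eq (hδ.trans_le hx)]
  exact inv_anti₀ (Real.sqrt_pos.2 hδ) (Real.sqrt_le_sqrt hx)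

lemma rpow_neg_half_diff {δ x y : ℝ} (hδ : 0 < δ) (hx : δ ≤ x) (hy : δ ≤ y) :
    |x ^ (-(1:ℝ)/2) - y ^ (-(1:ℝ)/2)| ≤ |x - y| / (2 * δ * Real.sqrt δ) := by
  have hx0 : 0 < x := hδ.trans_le hx
  have hy0 : 0 < y := hδ.trans_le hy
  rw [rpow_neg_half_eq hx0, rpow_neg_half_eq hy0]
  set s := Real.sqrt x with hs
  set t := Real.sqrt y with ht
  have hsδ : Real.sqrt δ ≤ s := Real.sqrt_le_sqrt hx
  have htδ : Real.sqrt δ ≤ t := Real.sqrt_le_sqrt hy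
  have hδs : 0 < Real.sqrt δ := Real.sqrt_pos.2 hδ
  have hs0 : 0 < s := lt_of_lt_of_le hδs hsδ
  have ht0 : 0 < t := lt_of_lt_of_le hδs htδ
  have hs2 : s ^ 2 = x := Real.sq_sqrt hx0.le
  have ht2 : t ^ 2 = y := Real.sq_sqrt hy0.le
  have key : |s⁻¹ - t⁻¹| * (s * t * (s + t)) = |y - x| := by
    rw [← abs_of_pos (show (0:ℝ) < s * t * (s+t) by positivity), ← abs_mul]
    congr 1
    field_simp
    rw [← hs2, ← ht2]; ring
  have hδ2 : Real.sqrt δ ^ 2 = δ := Real.sq_sqrt hδ.le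
  have hge : 2 * δ * Real.sqrt δ ≤ s * t * (s + t) := by
    have h1 : δ ≤ s * t := by
      calc δ = Real.sqrt δ * Real.sqrt δ := by rw [← sq, hδ2]
        _ ≤ s * t := mul_le_mul hsδ htδ hδs.le hs0.le
    have h2 : 2 * Real.sqrt δ ≤ s + t := by linarith
    calc 2 * δ * Real.sqrt δ = δ * (2 * Real.sqrt δ) := by ring
      _ ≤ (s * t) * (s + t) := mul_le_mul h1 h2 (by positivity) (by positivity)
  rw [abs_sub_comm x y, le_div_iff₀ (by positivity), ← key]
  exact mul_le_mul_of_nonneg_left hge (abs_nonneg _)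

-- Cauchy-Schwarz, dot product version
lemma dot_sq_le {q : ℕ} (y z : Fin q → ℝ) :
    (y ⬝ᵥ z) ^ 2 ≤ (∑ i, y i ^ 2) * (∑ i, z i ^ 2) :=
  Finset.sum_mul_sq_le_sq_mul_sq univ y z

-- |y ⬝ᵥ D *ᵥ z| ≤ ‖D‖_F √Qy √Qz
lemma dot_matrix_bound {q : ℕ} (D : Matrix (Fin q) (Fin q) ℝ) (y z : Fin q → ℝ) :
    |y ⬝ᵥ (D *ᵥ z)| ≤ Real.sqrt (∑ i, ∑ j, D i j ^ 2) *
      (Real.sqrt (∑ i, y i ^ 2) * Real.sqrt (∑ i, z i ^ 2)) := by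
  have expand : y ⬝ᵥ (D *ᵥ z) = ∑ p : Fin q × Fin q, D p.1 p.2 * (y p.1 * z p.2) := by
    rw [Fintype.sum_prod_type]
    simp only [dotProduct, mulVec, Finset.mul_sum]
    exact Finset.sum_congr rfl fun i _ => Finset.sum_congr rfl fun j _ => by ring
  have cs := Finset.sum_mul_sq_le_sq_mul_sq univ (fun p : Fin q × Fin q => D p.1 p.2)
      (fun p : Fin q × Fin q => y p.1 * z p.2)
  have h1 : ∑ p : Fin q × Fin q, D p.1 p.2 ^ 2 = ∑ i, ∑ j, D i j ^ 2 := by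
    rw [Fintype.sum_prod_type]
  have h2 : ∑ p : Fin q × Fin q, (y p.1 * z p.2) ^ 2
      = (∑ i, y i ^ 2) * (∑ i, z i ^ 2) := by
    rw [Fintype.sum_prod_type, Finset.sum_mul_sum]
    exact Finset.sum_congr rfl fun i _ => Finset.sum_congr rfl fun j _ => by ring
  rw [← Real.sqrt_sq_eq_abs, ← Real.sqrt_mul (by positivity), ← Real.sqrt_mul (by positivity)]
  apply Real.sqrt_le_sqrt
  calc (y ⬝ᵥ (D *ᵥ z)) ^ 2 ≤ (∑ i, ∑ j, D i j ^ 2) * ((∑ i, y i ^ 2) * (∑ i, z i ^ 2)) := by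
        rw [expand, ← h1, ← h2]; exact cs
    _ = _ := by ring

-- entry bound from Frobenius
lemma entry_le_frobenius {q : ℕ} (D : Matrix (Fin q) (Fin q) ℝ) (i j : Fin q) :
    |D i j| ≤ Real.sqrt (∑ i, ∑ j, D i j ^ 2) := by
  rw [← Real.sqrt_sq_eq_abs]
  apply Real.sqrt_le_sqrt
  calc D i j ^ 2 ≤ ∑ j', D i j' ^ 2 :=
        Finset.single_le_sum (f := fun j' => D i j' ^ 2) (fun _ _ => sq_nonneg _)
          (Finset.mem_univ j)
    _ ≤ ∑ i', ∑ j', D i' j' ^ 2 :=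
        Finset.single_le_sum (f := fun i' => ∑ j', D i' j' ^ 2)
          (fun _ _ => Finset.sum_nonneg fun _ _ => sq_nonneg _) (Finset.mem_univ i)

-- CS for symmetric PSD form
lemma form_cs {q : ℕ} {S : Matrix (Fin q) (Fin q) ℝ} (hsym : S.IsSymm)
    (hpos : ∀ x : Fin q → ℝ, 0 ≤ x ⬝ᵥ (S *ᵥ x)) (x y : Fin q → ℝ) :
    (x ⬝ᵥ (S *ᵥ y)) ^ 2 ≤ (x ⬝ᵥ (S *ᵥ x)) * (y ⬝ᵥ (S *ᵥ y)) := by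
  have symm_dot : ∀ u v : Fin q → ℝ, u ⬝ᵥ (S *ᵥ v) = v ⬝ᵥ (S *ᵥ u) := by
    intro u v
    rw [dotProduct_mulVec, ← mulVec_transpose, hsym.eq, dotProduct_comm]
  have key : ∀ t : ℝ, 0 ≤ (y ⬝ᵥ (S *ᵥ y)) * (t * t) + (2 * (x ⬝ᵥ (S *ᵥ y))) * t
      + x ⬝ᵥ (S *ᵥ x) := by
    intro t
    have h := hpos (x + t • y)
    have expand : (x + t • y) ⬝ᵥ (S *ᵥ (x + t • y))
        = x ⬝ᵥ (S *ᵥ x) + t * (x ⬝ᵥ (S *ᵥ y)) + t * (y ⬝ᵥ (S *ᵥ x))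
          + t * t * (y ⬝ᵥ (S *ᵥ y)) := by
      simp only [mulVec_add, mulVec_smul, add_dotProduct, smul_dotProduct,
        dotProduct_add, dotProduct_smul, smul_eq_mul]
      ring
    rw [expand, symm_dot y x] at h
    nlinarith [h]
  have disc := discrim_le_zero key
  have h4 : discrim (y ⬝ᵥ (S *ᵥ y)) (2 * (x ⬝ᵥ (S *ᵥ y))) (x ⬝ᵥ (S *ᵥ x))
      = 4 * ((x ⬝ᵥ (S *ᵥ y)) ^ 2 - (x ⬝ᵥ (S *ᵥ x)) * (y ⬝ᵥ (S *ᵥ y))) := by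
    rw [discrim]; ring
  rw [h4] at disc
  linarith

section matrixfacts

variable {q : ℕ} {m M : ℝ} (hm : 0 < m) (hmM : m ≤ M)
  {S : Matrix (Fin q) (Fin q) ℝ} (hsym : S.IsSymm) (hpd : S.PosDef)
  (hlo : ∀ x : Fin q → ℝ, m * ∑ i, x i ^ 2 ≤ x ⬝ᵥ (S *ᵥ x))
  (hhi : ∀ x : Fin q → ℝ, x ⬝ᵥ (S *ᵥ x) ≤ M * ∑ i, x i ^ 2)

include hpd in
lemma det_isUnit : IsUnit S.det := isUnit_iff_ne_zero.2 (ne_of_gt hpd.det_pos)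

include hsym in
lemma inv_symm : (S⁻¹).IsSymm := by
  rw [Matrix.IsSymm, Matrix.transpose_nonsing_inv, hsym.eq]

include hpd in
lemma mulVec_inv_cancel (x : Fin q → ℝ) : S *ᵥ (S⁻¹ *ᵥ x) = x := by
  rw [mulVec_mulVec, Matrix.mul_nonsing_inv _ (det_isUnit hpd), one_mulVec]

include hpd in
lemma inv_mulVec_cancel (x : Fin q → ℝ) : S⁻¹ *ᵥ (S *ᵥ x) = x := by
  rw [mulVec_mulVec, Matrix.nonsing_inv_mul _ (det_isUnit hpd), one_mulVec]

include hm hmM hsym hpd hlo hhi in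
lemma invform_bounds (x : Fin q → ℝ) :
    (1 / M) * ∑ i, x i ^ 2 ≤ x ⬝ᵥ (S⁻¹ *ᵥ x) ∧
    x ⬝ᵥ (S⁻¹ *ᵥ x) ≤ (1 / m) * ∑ i, x i ^ 2 ∧
    ∑ i, (S⁻¹ *ᵥ x) i ^ 2 ≤ (∑ i, x i ^ 2) / m ^ 2 := by
  have hM : 0 < M := lt_of_lt_of_le hm hmM
  set Qx := ∑ i, x i ^ 2 with hQx
  have hQx0 : 0 ≤ Qx := Finset.sum_nonneg fun _ _ => sq_nonneg _
  set y := S⁻¹ *ᵥ x with hy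
  have hQy0 : 0 ≤ ∑ i, y i ^ 2 := Finset.sum_nonneg fun _ _ => sq_nonneg _
  have hSy : S *ᵥ y = x := mulVec_inv_cancel hpd x
  have hpos : ∀ z : Fin q → ℝ, 0 ≤ z ⬝ᵥ (S *ᵥ z) := fun z =>
    le_trans (by positivity) (hlo z)
  -- y S y = x ⬝ᵥ y = x S⁻¹ x
  have hySy : y ⬝ᵥ (S *ᵥ y) = x ⬝ᵥ (S⁻¹ *ᵥ x) := by
    rw [hSy, dotProduct_comm, hy]
  have hySy_nonneg : 0 ≤ x ⬝ᵥ (S⁻¹ *ᵥ x) := hySy ▸ hpos y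
  -- dot x x = Qx
  have hxx : x ⬝ᵥ x = Qx := by
    simp [dotProduct, hQx, sq]
  -- lower bound: Qx^2 = (x ⬝ᵥ S y)^2 ≤ (xSx)(ySy) ≤ M Qx (x S⁻¹ x)
  have hlow : (1 / M) * Qx ≤ x ⬝ᵥ (S⁻¹ *ᵥ x) := by
    have h1 : (x ⬝ᵥ (S *ᵥ y)) ^ 2 ≤ (x ⬝ᵥ (S *ᵥ x)) * (y ⬝ᵥ (S *ᵥ y)) :=
      form_cs hsym hpos x y
    rw [hySy, hSy, hxx] at h1
    have h2 : Qx ^ 2 ≤ M * Qx * (x ⬝ᵥ (S⁻¹ *ᵥ x)) :=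
      h1.trans (mul_le_mul_of_nonneg_right (hhi x) hySy_nonneg)
    rcases eq_or_lt_of_le hQx0 with h | h
    · rw [← h]; simpa using hySy_nonneg
    · rw [div_mul_eq_mul_div, div_le_iff₀ hM]
      nlinarith
  -- m Qy ≤ x S⁻¹ x
  have hQy' : m * ∑ i, y i ^ 2 ≤ x ⬝ᵥ (S⁻¹ *ᵥ x) := by
    have h1 := hlo y
    rw [hySy] at h1
    exact h1
  -- upper bound
  have hup : x ⬝ᵥ (S⁻¹ *ᵥ x) ≤ (1 / m) * Qx := by
    have h1 : (x ⬝ᵥ y) ^ 2 ≤ Qx * ∑ i, y i ^ 2 := dot_sq_le x y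
    have h2 : x ⬝ᵥ y = x ⬝ᵥ (S⁻¹ *ᵥ x) := rfl
    rw [h2] at h1
    have e1 : m * (x ⬝ᵥ (S⁻¹ *ᵥ x)) ^ 2 ≤ m * (Qx * ∑ i, y i ^ 2) :=
      mul_le_mul_of_nonneg_left h1 hm.le
    have e2 : Qx * (m * ∑ i, y i ^ 2) ≤ Qx * (x ⬝ᵥ (S⁻¹ *ᵥ x)) :=
      mul_le_mul_of_nonneg_left hQy' hQx0
    rcases eq_or_lt_of_le hySy_nonneg with h | h
    · rw [← h]; positivity
    · rw [div_mul_eq_mul_div, le_div_iff₀ hm]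
      nlinarith
  refine ⟨hlow, hup, ?_⟩
  have hQy : ∑ i, y i ^ 2 ≤ (x ⬝ᵥ (S⁻¹ *ᵥ x)) / m := by
    rw [le_div_iff₀ hm]; linarith
  calc ∑ i, y i ^ 2 ≤ (x ⬝ᵥ (S⁻¹ *ᵥ x)) / m := hQy
    _ ≤ ((1 / m) * Qx) / m := by gcongr
    _ = Qx / m ^ 2 := by rw [sq, div_mul_eq_mul_div, one_mul, div_div]

end matrixfacts

lemma abs_prod_le {ι : Type*} (s : Finset ι) (a : ι → ℝ) (C : ℝ)
    (ha : ∀ i, |a i| ≤ C) : |∏ i ∈ s, a i| ≤ C ^ s.card := by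
  rw [Finset.abs_prod]
  calc ∏ i ∈ s, |a i| ≤ ∏ i ∈ s, C :=
        Finset.prod_le_prod (fun _ _ => abs_nonneg _) (fun i _ => ha i)
    _ = C ^ s.card := Finset.prod_const C

lemma abs_prod_sub_prod_le {ι : Type*} [DecidableEq ι] (s : Finset ι) (a b : ι → ℝ)
    (C dd : ℝ) (hC : 1 ≤ C) (hd : 0 ≤ dd) (ha : ∀ i, |a i| ≤ C) (hb : ∀ i, |b i| ≤ C)
    (hab : ∀ i, |a i - b i| ≤ dd) :
    |∏ i ∈ s, a i - ∏ i ∈ s, b i| ≤ s.card * C ^ s.card * dd := by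
  induction s using Finset.induction_on with
  | empty => simp
  | @insert i s hni ih =>
    rw [Finset.prod_insert hni, Finset.prod_insert hni, Finset.card_insert_of_notMem hni]
    have key : a i * ∏ j ∈ s, a j - b i * ∏ j ∈ s, b j
        = (a i - b i) * ∏ j ∈ s, a j + b i * (∏ j ∈ s, a j - ∏ j ∈ s, b j) := by ring
    have hC0 : 0 ≤ C := le_trans zero_le_one hC
    calc |a i * ∏ j ∈ s, a j - b i * ∏ j ∈ s, b j|
        ≤ |a i - b i| * |∏ j ∈ s, a j| + |b i| * |∏ j ∈ s, a j - ∏ j ∈ s, b j| := by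
          rw [key]
          exact (abs_add_le _ _).trans (by rw [abs_mul, abs_mul])
      _ ≤ dd * C ^ s.card + C * (s.card * C ^ s.card * dd) := by
          apply add_le_add
          · exact mul_le_mul (hab i) (abs_prod_le s a C ha) (abs_nonneg _) hd
          · exact mul_le_mul (hb i) ih (abs_nonneg _) hC0
      _ = dd * C ^ s.card + (s.card : ℝ) * C ^ (s.card + 1) * dd := by ring
      _ ≤ dd * C ^ (s.card + 1) + (s.card : ℝ) * C ^ (s.card + 1) * dd := by
          have h1 : C ^ s.card ≤ C ^ (s.card + 1) := pow_le_pow_right₀ hC (by omega)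
          have := mul_le_mul_of_nonneg_left h1 hd
          linarith
      _ = ((s.card + 1 : ℕ) : ℝ) * C ^ (s.card + 1) * dd := by push_cast; ring

lemma det_diff_le {q : ℕ} (A B : Matrix (Fin q) (Fin q) ℝ) (C dd : ℝ) (hC : 1 ≤ C)
    (hd : 0 ≤ dd) (hA : ∀ i j, |A i j| ≤ C) (hB : ∀ i j, |B i j| ≤ C)
    (hAB : ∀ i j, |A i j - B i j| ≤ dd) :
    |A.det - B.det| ≤ (Nat.factorial q) * (q * C ^ q * dd) := by
  rw [Matrix.det_apply, Matrix.det_apply, ← Finset.sum_sub_distrib]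
  apply (Finset.abs_sum_le_sum_abs _ _).trans
  have hbound : ∀ σ : Equiv.Perm (Fin q),
      |Equiv.Perm.sign σ • ∏ i, A (σ i) i - Equiv.Perm.sign σ • ∏ i, B (σ i) i|
        ≤ q * C ^ q * dd := by
    intro σ
    have base : |∏ i, A (σ i) i - ∏ i, B (σ i) i| ≤ q * C ^ q * dd := by
      have := abs_prod_sub_prod_le (univ : Finset (Fin q)) (fun i => A (σ i) i)
        (fun i => B (σ i) i) C dd hC hd (fun i => hA _ _) (fun i => hB _ _)
        (fun i => hAB _ _)
      simpa using this
    rcases Int.units_eq_one_or (Equiv.Perm.sign σ) with h | h <;> rw [h] <;>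
      simp only [one_smul, Units.neg_smul, neg_sub_neg] <;>
      [exact base; rwa [abs_sub_comm]]
  calc ∑ σ : Equiv.Perm (Fin q),
        |Equiv.Perm.sign σ • ∏ i, A (σ i) i - Equiv.Perm.sign σ • ∏ i, B (σ i) i|
      ≤ ∑ _σ : Equiv.Perm (Fin q), q * C ^ q * dd :=
        Finset.sum_le_sum fun σ _ => hbound σ
    _ = (Nat.factorial q) * (q * C ^ q * dd) := by
        rw [Finset.sum_const, Finset.card_univ, Fintype.card_perm, Fintype.card_fin,
          nsmul_eq_mul]

lemma single_form {q : ℕ} (A : Matrix (Fin q) (Fin q) ℝ) (i j : Fin q) :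
    Pi.single i (1:ℝ) ⬝ᵥ (A *ᵥ Pi.single j 1) = A i j := by
  rw [single_dotProduct, one_mul, Matrix.mulVec_single]
  simp

lemma Qsingle {q : ℕ} (i : Fin q) : ∑ k, (Pi.single i (1:ℝ)) k ^ 2 = (1:ℝ) := by
  rw [Finset.sum_eq_single i]
  · simp
  · intro k _ hk; simp [Pi.single_apply, hk]
  · intro h; exact absurd (Finset.mem_univ i) h

-- entry bound from form bounds via CS
lemma entry_bound_of_form {q : ℕ} {S : Matrix (Fin q) (Fin q) ℝ} {M : ℝ}
    (hsym : S.IsSymm) (hpos : ∀ x : Fin q → ℝ, 0 ≤ x ⬝ᵥ (S *ᵥ x))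
    (hhi : ∀ x : Fin q → ℝ, x ⬝ᵥ (S *ᵥ x) ≤ M * ∑ i, x i ^ 2) (hM : 0 ≤ M)
    (i j : Fin q) : |S i j| ≤ M := by
  have h1 := form_cs hsym hpos (Pi.single i 1) (Pi.single j 1)
  rw [single_form, single_form, single_form] at h1
  have hii : S i i ≤ M := by have := hhi (Pi.single i 1); rwa [single_form, Qsingle, mul_one] at this
  have hjj : S j j ≤ M := by have := hhi (Pi.single j 1); rwa [single_form, Qsingle, mul_one] at this
  have hii0 : 0 ≤ S i i := by have := hpos (Pi.single i 1); rwa [single_form] at this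
  have hjj0 : 0 ≤ S j j := by have := hpos (Pi.single j 1); rwa [single_form] at this
  have h2 : (S i j) ^ 2 ≤ M ^ 2 := by nlinarith
  calc |S i j| = Real.sqrt ((S i j) ^ 2) := (Real.sqrt_sq_eq_abs _).symm
    _ ≤ Real.sqrt (M ^ 2) := Real.sqrt_le_sqrt h2
    _ = M := Real.sqrt_sq hM

-- det lower bound
lemma det_lower {q : ℕ} {S : Matrix (Fin q) (Fin q) ℝ} {m : ℝ} (hm : 0 < m)
    (hdet : 0 < S.det) (hinv : ∀ i j, |S⁻¹ i j| ≤ 1 / m) :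
    m ^ q / (Nat.factorial q) ≤ S.det := by
  have hdinv : (S⁻¹).det = (S.det)⁻¹ := by
    rw [Matrix.det_nonsing_inv, Ring.inverse_eq_inv']
  have hinv_pos : 0 < (S⁻¹).det := by rw [hdinv]; exact inv_pos.2 hdet
  have hle : (S⁻¹).det ≤ (Nat.factorial q) * (1 / m) ^ q := by
    have := Matrix.det_le (A := S⁻¹) (abv := AbsoluteValue.abs) (x := 1/m) hinv
    simp only [Fintype.card_fin, nsmul_eq_mul] at this
    exact le_trans (le_abs_self _) this
  have hfac : (0:ℝ) < (Nat.factorial q) * (1 / m) ^ q := by positivity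
  have h2 : ((Nat.factorial q) * (1 / m) ^ q)⁻¹ ≤ ((S⁻¹).det)⁻¹ :=
    inv_anti₀ hinv_pos hle
  rw [hdinv, inv_inv] at h2
  refine le_trans (le_of_eq ?_) h2
  rw [one_div, inv_pow, mul_inv, inv_inv, div_eq_mul_inv, mul_comm]

-- previously proven (sorried here for speed)
lemma mul_exp_le {t s : ℝ} (ht : 0 ≤ t) (hs : 0 < s) : t * Real.exp (-(t/s)) ≤ s := by
  have h1 : t / s + 1 ≤ Real.exp (t / s) := Real.add_one_le_exp _
  rw [Real.exp_neg]
  rw [mul_inv_le_iff₀ (Real.exp_pos _)]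
  have h2 : s * (t/s + 1) ≤ s * Real.exp (t/s) := mul_le_mul_of_nonneg_left h1 hs.le
  calc t ≤ s * (t/s + 1) := by
        rw [mul_add, mul_one, mul_div_cancel₀ _ hs.ne']; linarith
    _ ≤ s * Real.exp (t/s) := h2

lemma cont_form {q : ℕ} (A : Matrix (Fin q) (Fin q) ℝ) :
    Continuous fun x : Fin q → ℝ => x ⬝ᵥ (A *ᵥ x) := by
  simp only [dotProduct, mulVec]
  exact continuous_finset_sum _ fun i _ => (continuous_apply i).mul
    (continuous_finset_sum _ fun j _ => continuous_const.mul (continuous_apply j))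

lemma integrable_gauss {q : ℕ} {b : ℝ} (hb : 0 < b) :
    Integrable (fun x : Fin q → ℝ => Real.exp (-b * ∑ i, x i ^ 2)) := by
  have heq : (fun x : Fin q → ℝ => Real.exp (-b * ∑ i, x i ^ 2))
      = fun x : Fin q → ℝ => ∏ i, Real.exp (-b * x i ^ 2) := by
    funext x
    rw [← Real.exp_sum, Finset.mul_sum]
  rw [heq]
  exact Integrable.fintype_prod (f := fun _ (v : ℝ) => Real.exp (-b * v ^ 2))
    (fun _ => integrable_exp_neg_mul_sq hb)

-- quadratic form difference bound
lemma form_diff_bound {q : ℕ} {m M : ℝ} (hm : 0 < m) (hmM : m ≤ M)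
    {S S' : Matrix (Fin q) (Fin q) ℝ} (hsymS : S.IsSymm) (hpdS : S.PosDef)
    (hymS' : S'.IsSymm) (hpdS' : S'.PosDef)
    (hformS : ∀ x : Fin q → ℝ, m * ∑ i, x i ^ 2 ≤ x ⬝ᵥ (S *ᵥ x) ∧
      x ⬝ᵥ (S *ᵥ x) ≤ M * ∑ i, x i ^ 2)
    (hformS' : ∀ x : Fin q → ℝ, m * ∑ i, x i ^ 2 ≤ x ⬝ᵥ (S' *ᵥ x) ∧
      x ⬝ᵥ (S' *ᵥ x) ≤ M * ∑ i, x i ^ 2)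
    {dd : ℝ} (hdd : Real.sqrt (∑ i, ∑ j, (S i j - S' i j) ^ 2) ≤ dd) (hdd0 : 0 ≤ dd)
    (x : Fin q → ℝ) :
    |x ⬝ᵥ (S⁻¹ *ᵥ x) - x ⬝ᵥ (S'⁻¹ *ᵥ x)| ≤ dd * (∑ i, x i ^ 2) / m ^ 2 := by
  have hM : 0 < M := lt_of_lt_of_le hm hmM
  have hinvS := invform_bounds hm hmM hsymS hpdS (fun y => (hformS y).1)
    (fun y => (hformS y).2)
  have hinvS' := invform_bounds hm hmM hymS' hpdS' (fun y => (hformS' y).1)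
    (fun y => (hformS' y).2)
  have hdetunit : IsUnit S.det := isUnit_iff_ne_zero.2 (ne_of_gt hpdS.det_pos)
  have hdetunit' : IsUnit S'.det := isUnit_iff_ne_zero.2 (ne_of_gt hpdS'.det_pos)
  set Qx := ∑ i, x i ^ 2 with hQx
  have hQx0 : 0 ≤ Qx := Finset.sum_nonneg fun _ _ => sq_nonneg _
  have hid : S⁻¹ - S'⁻¹ = S⁻¹ * (S' - S) * S'⁻¹ := by
    rw [Matrix.mul_sub, Matrix.nonsing_inv_mul _ hdetunit, Matrix.sub_mul, one_mul,
      Matrix.mul_assoc, Matrix.mul_nonsing_inv _ hdetunit', Matrix.mul_one]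
  have hrw : x ⬝ᵥ (S⁻¹ *ᵥ x) - x ⬝ᵥ (S'⁻¹ *ᵥ x)
      = (S⁻¹ *ᵥ x) ⬝ᵥ ((S' - S) *ᵥ (S'⁻¹ *ᵥ x)) := by
    rw [← dotProduct_sub, ← Matrix.sub_mulVec, hid, ← Matrix.mulVec_mulVec,
      ← Matrix.mulVec_mulVec, Matrix.dotProduct_mulVec x S⁻¹,
      ← Matrix.mulVec_transpose, (inv_symm hsymS).eq]
  rw [hrw]
  have hfrob : Real.sqrt (∑ i, ∑ j, (S' - S) i j ^ 2) ≤ dd := by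
    have he : ∑ i, ∑ j, (S' - S) i j ^ 2 = ∑ i, ∑ j, (S i j - S' i j) ^ 2 := by
      refine Finset.sum_congr rfl fun i _ => Finset.sum_congr rfl fun j _ => ?_
      rw [Matrix.sub_apply]
      ring
    rw [he]
    exact hdd
  have hy : Real.sqrt (∑ i, (S⁻¹ *ᵥ x) i ^ 2) ≤ Real.sqrt (Qx / m ^ 2) :=
    Real.sqrt_le_sqrt (hinvS x).2.2
  have hz : Real.sqrt (∑ i, (S'⁻¹ *ᵥ x) i ^ 2) ≤ Real.sqrt (Qx / m ^ 2) :=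
    Real.sqrt_le_sqrt (hinvS' x).2.2
  calc |(S⁻¹ *ᵥ x) ⬝ᵥ ((S' - S) *ᵥ (S'⁻¹ *ᵥ x))|
      ≤ Real.sqrt (∑ i, ∑ j, (S' - S) i j ^ 2) *
        (Real.sqrt (∑ i, (S⁻¹ *ᵥ x) i ^ 2) * Real.sqrt (∑ i, (S'⁻¹ *ᵥ x) i ^ 2)) :=
        dot_matrix_bound _ _ _
    _ ≤ dd * (Real.sqrt (Qx / m ^ 2) * Real.sqrt (Qx / m ^ 2)) := by
        apply mul_le_mul hfrob _ (by positivity) hdd0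
        exact mul_le_mul hy hz (Real.sqrt_nonneg _) (Real.sqrt_nonneg _)
    _ = dd * (Qx / m ^ 2) := by
        rw [Real.mul_self_sqrt (by positivity)]
    _ = dd * Qx / m ^ 2 := by ring

-- determinant-power difference bound
lemma det_pow_diff_bound {q : ℕ} {m M : ℝ} (hm : 0 < m) (hmM : m ≤ M)
    {S S' : Matrix (Fin q) (Fin q) ℝ} (hsymS : S.IsSymm) (hpdS : S.PosDef)
    (hymS' : S'.IsSymm) (hpdS' : S'.PosDef)
    (hformS : ∀ x : Fin q → ℝ, m * ∑ i, x i ^ 2 ≤ x ⬝ᵥ (S *ᵥ x) ∧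
      x ⬝ᵥ (S *ᵥ x) ≤ M * ∑ i, x i ^ 2)
    (hformS' : ∀ x : Fin q → ℝ, m * ∑ i, x i ^ 2 ≤ x ⬝ᵥ (S' *ᵥ x) ∧
      x ⬝ᵥ (S' *ᵥ x) ≤ M * ∑ i, x i ^ 2)
    {dd : ℝ} (hdd : Real.sqrt (∑ i, ∑ j, (S i j - S' i j) ^ 2) ≤ dd) (hdd0 : 0 ≤ dd) :
    |S.det ^ (-(1:ℝ)/2) - S'.det ^ (-(1:ℝ)/2)| ≤
      (((Nat.factorial q) * (q * (max M 1) ^ q)) /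
        (2 * (m ^ q / (Nat.factorial q)) * Real.sqrt (m ^ q / (Nat.factorial q)))) * dd := by
  have hM : 0 < M := lt_of_lt_of_le hm hmM
  set δ0 : ℝ := m ^ q / (Nat.factorial q) with hδ0
  have hδ0pos : 0 < δ0 := by positivity
  set C : ℝ := max M 1 with hC
  have hC1 : 1 ≤ C := le_max_right _ _
  have hposS : ∀ x : Fin q → ℝ, 0 ≤ x ⬝ᵥ (S *ᵥ x) := fun x =>
    le_trans (by positivity) (hformS x).1
  have hposS' : ∀ x : Fin q → ℝ, 0 ≤ x ⬝ᵥ (S' *ᵥ x) := fun x =>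
    le_trans (by positivity) (hformS' x).1
  have hinvS := invform_bounds hm hmM hsymS hpdS (fun y => (hformS y).1)
    (fun y => (hformS y).2)
  have hinvS' := invform_bounds hm hmM hymS' hpdS' (fun y => (hformS' y).1)
    (fun y => (hformS' y).2)
  have hinvpos : ∀ x : Fin q → ℝ, 0 ≤ x ⬝ᵥ (S⁻¹ *ᵥ x) := fun x =>
    le_trans (by positivity) (hinvS x).1
  have hinvpos' : ∀ x : Fin q → ℝ, 0 ≤ x ⬝ᵥ (S'⁻¹ *ᵥ x) := fun x =>
    le_trans (by positivity) (hinvS' x).1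
  have hinv_entries : ∀ i j, |S⁻¹ i j| ≤ 1/m :=
    entry_bound_of_form (inv_symm hsymS) hinvpos (fun x => (hinvS x).2.1) (by positivity)
  have hinv_entries' : ∀ i j, |S'⁻¹ i j| ≤ 1/m :=
    entry_bound_of_form (inv_symm hymS') hinvpos' (fun x => (hinvS' x).2.1) (by positivity)
  have hdetS : δ0 ≤ S.det := det_lower hm hpdS.det_pos hinv_entries
  have hdetS' : δ0 ≤ S'.det := det_lower hm hpdS'.det_pos hinv_entries'
  have hentS : ∀ i j, |S i j| ≤ C := fun i j =>
    le_trans (entry_bound_of_form hsymS hposS (fun y => (hformS y).2) hM.le i j)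
      (le_max_left _ _)
  have hentS' : ∀ i j, |S' i j| ≤ C := fun i j =>
    le_trans (entry_bound_of_form hymS' hposS' (fun y => (hformS' y).2) hM.le i j)
      (le_max_left _ _)
  have hentdiff : ∀ i j, |S i j - S' i j| ≤ dd := fun i j => by
    have h := entry_le_frobenius (S - S') i j
    simp only [Matrix.sub_apply] at h
    exact h.trans hdd
  have h1 : |S.det - S'.det| ≤ (Nat.factorial q) * (q * C ^ q * dd) :=
    det_diff_le S S' C dd hC1 hdd0 hentS hentS' hentdiff
  have h2 := rpow_neg_half_diff hδ0pos hdetS hdetS'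
  calc |S.det ^ (-(1:ℝ)/2) - S'.det ^ (-(1:ℝ)/2)|
      ≤ |S.det - S'.det| / (2 * δ0 * Real.sqrt δ0) := h2
    _ ≤ ((Nat.factorial q) * (q * C ^ q * dd)) / (2 * δ0 * Real.sqrt δ0) := by
        apply div_le_div_of_nonneg_right h1 (by positivity) |>.trans_eq rfl
    _ = (((Nat.factorial q) * (q * C ^ q)) / (2 * δ0 * Real.sqrt δ0)) * dd := by ring

-- integrability of the gaussian-type density
lemma gauss_density_integrable {q : ℕ} {M aT cT : ℝ} (hM : 0 < M) (hcT : 0 ≤ cT)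
    (haT0 : 0 ≤ aT) {T : Matrix (Fin q) (Fin q) ℝ}
    (hTlo : ∀ x : Fin q → ℝ, (1/M) * ∑ i, x i ^ 2 ≤ x ⬝ᵥ (T *ᵥ x)) :
    Integrable (fun x : Fin q → ℝ => cT * aT * Real.exp (-(x ⬝ᵥ (T *ᵥ x)) / 2)) := by
  have hcont : Continuous (fun x : Fin q → ℝ => cT * aT * Real.exp (-(x ⬝ᵥ (T *ᵥ x)) / 2)) :=
    continuous_const.mul (((cont_form T).neg.div_const 2).rexp)
  apply Integrable.mono' (((integrable_gauss (q := q) (b := 1/(2*M)) (by positivity))).const_mul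
    (cT * aT)) hcont.aestronglyMeasurable
  filter_upwards with x
  have hQx0 : (0:ℝ) ≤ ∑ i, x i ^ 2 := Finset.sum_nonneg fun _ _ => sq_nonneg _
  have h1 : -(x ⬝ᵥ (T *ᵥ x)) / 2 ≤ -(1/(2*M)) * ∑ i, x i ^ 2 := by
    have h0 := hTlo x
    have e : -(1/(2*M)) * (∑ i, x i ^ 2) = -(((1/M) * ∑ i, x i ^ 2)/2) := by ring
    rw [e]
    linarith
  have h2 : Real.exp (-(x ⬝ᵥ (T *ᵥ x)) / 2) ≤ Real.exp (-(1/(2*M)) * ∑ i, x i ^ 2) :=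
    Real.exp_le_exp.2 h1
  rw [Real.norm_eq_abs, abs_of_nonneg (by positivity)]
  exact mul_le_mul_of_nonneg_left h2 (by positivity)

-- pointwise difference bound
lemma gauss_pointwise_diff {q : ℕ} {m M : ℝ} (hm : 0 < m) (hmM : m ≤ M)
    {S S' : Matrix (Fin q) (Fin q) ℝ} (hsymS : S.IsSymm) (hpdS : S.PosDef)
    (hymS' : S'.IsSymm) (hpdS' : S'.PosDef)
    (hformS : ∀ x : Fin q → ℝ, m * ∑ i, x i ^ 2 ≤ x ⬝ᵥ (S *ᵥ x) ∧
      x ⬝ᵥ (S *ᵥ x) ≤ M * ∑ i, x i ^ 2)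
    (hformS' : ∀ x : Fin q → ℝ, m * ∑ i, x i ^ 2 ≤ x ⬝ᵥ (S' *ᵥ x) ∧
      x ⬝ᵥ (S' *ᵥ x) ≤ M * ∑ i, x i ^ 2)
    {dd : ℝ} (hdd : Real.sqrt (∑ i, ∑ j, (S i j - S' i j) ^ 2) ≤ dd) (hdd0 : 0 ≤ dd)
    (x : Fin q → ℝ) :
    |(2 * π) ^ (-(q : ℝ) / 2) * S.det ^ (-(1 : ℝ) / 2) * Real.exp (-(x ⬝ᵥ (S⁻¹ *ᵥ x)) / 2)
      - (2 * π) ^ (-(q : ℝ) / 2) * S'.det ^ (-(1 : ℝ) / 2) *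
          Real.exp (-(x ⬝ᵥ (S'⁻¹ *ᵥ x)) / 2)|
    ≤ ((2 * π) ^ (-(q : ℝ) / 2) *
        ((((Nat.factorial q) * (q * (max M 1) ^ q)) /
          (2 * (m ^ q / (Nat.factorial q)) * Real.sqrt (m ^ q / (Nat.factorial q))))
         + (2 * M / m ^ 2) * (Real.sqrt (m ^ q / (Nat.factorial q)))⁻¹) * dd)
      * Real.exp (-(1/(4*M)) * ∑ i, x i ^ 2) := by
  have hM : 0 < M := lt_of_lt_of_le hm hmM
  set c : ℝ := (2 * π) ^ (-(q : ℝ) / 2) with hc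
  have hc0 : 0 < c := Real.rpow_pos_of_pos (by positivity) _
  set δ0 : ℝ := m ^ q / (Nat.factorial q) with hδ0
  have hδ0pos : 0 < δ0 := by positivity
  set amax : ℝ := (Real.sqrt δ0)⁻¹ with hamax
  have hamax0 : 0 < amax := by positivity
  set A1 : ℝ := ((Nat.factorial q) * (q * (max M 1) ^ q)) / (2 * δ0 * Real.sqrt δ0) with hA1
  have hA10 : 0 ≤ A1 := by positivity
  set a : ℝ := S.det ^ (-(1:ℝ)/2) with ha
  set a' : ℝ := S'.det ^ (-(1:ℝ)/2) with ha'
  have hinvS := invform_bounds hm hmM hsymS hpdS (fun y => (hformS y).1)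
    (fun y => (hformS y).2)
  have hinvS' := invform_bounds hm hmM hymS' hpdS' (fun y => (hformS' y).1)
    (fun y => (hformS' y).2)
  have hinvpos : ∀ y : Fin q → ℝ, 0 ≤ y ⬝ᵥ (S⁻¹ *ᵥ y) := fun y =>
    le_trans (by positivity) (hinvS y).1
  have hinvpos' : ∀ y : Fin q → ℝ, 0 ≤ y ⬝ᵥ (S'⁻¹ *ᵥ y) := fun y =>
    le_trans (by positivity) (hinvS' y).1
  have hinv_entries : ∀ i j, |S⁻¹ i j| ≤ 1/m :=
    entry_bound_of_form (inv_symm hsymS) hinvpos (fun y => (hinvS y).2.1) (by positivity)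
  have hinv_entries' : ∀ i j, |S'⁻¹ i j| ≤ 1/m :=
    entry_bound_of_form (inv_symm hymS') hinvpos' (fun y => (hinvS' y).2.1) (by positivity)
  have hdetS : δ0 ≤ S.det := det_lower hm hpdS.det_pos hinv_entries
  have hdetS' : δ0 ≤ S'.det := det_lower hm hpdS'.det_pos hinv_entries'
  have haa' : |a - a'| ≤ A1 * dd :=
    det_pow_diff_bound hm hmM hsymS hpdS hymS' hpdS' hformS hformS' hdd hdd0
  have ha'max : a' ≤ amax := rpow_neg_half_le hδ0pos hdetS'
  have ha'0 : 0 ≤ a' := Real.rpow_nonneg hpdS'.det_pos.le _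
  have hform_diff := form_diff_bound hm hmM hsymS hpdS hymS' hpdS' hformS hformS' hdd hdd0
  set Qx := ∑ i, x i ^ 2 with hQx
  have hQx0 : 0 ≤ Qx := Finset.sum_nonneg fun _ _ => sq_nonneg _
  set u := x ⬝ᵥ (S⁻¹ *ᵥ x) with hu
  set v := x ⬝ᵥ (S'⁻¹ *ᵥ x) with hv
  set E1 := Real.exp (-u / 2) with hE1
  set E2 := Real.exp (-v / 2) with hE2
  set e4 := Real.exp (-(Qx/(4*M))) with he4
  have he40 : 0 < e4 := Real.exp_pos _
  have hE1eq : E1 = Real.exp (-(u/2)) := by rw [hE1, neg_div]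
  have hE2eq : E2 = Real.exp (-(v/2)) := by rw [hE2, neg_div]
  have ehalf : Qx/(2*M) = ((1/M) * Qx)/2 := by
    field_simp
  have hul : Qx/(2*M) ≤ u/2 := by
    have h := (hinvS x).1
    rw [ehalf]
    linarith
  have hvl : Qx/(2*M) ≤ v/2 := by
    have h := (hinvS' x).1
    rw [ehalf]
    linarith
  have h2M4M : Qx/(4*M) ≤ Qx/(2*M) := by gcongr <;> linarith
  have hE1le : E1 ≤ e4 := by
    rw [hE1eq, he4]
    exact Real.exp_le_exp.2 (by linarith)
  have eprod : Real.exp (-(Qx/(2*M))) = e4 * e4 := by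
    rw [he4, ← Real.exp_add]
    congr 1
    field_simp
    ring
  have eQ : Qx * e4 ≤ 4*M := by
    have := mul_exp_le hQx0 (show (0:ℝ) < 4*M by positivity)
    rwa [he4]
  have split : c * a * E1 - c * a' * E2 = c * ((a - a') * E1 + a' * (E1 - E2)) := by ring
  have hdiffE : |E1 - E2| ≤ (dd * Qx / m^2 / 2) * (e4 * e4) := by
    rw [hE1eq, hE2eq, ← eprod]
    have h1 := exp_diff_le hul hvl
    have h2 : |u/2 - v/2| ≤ dd * Qx / m^2 / 2 := by
      have h3 := hform_diff x
      have e : u/2 - v/2 = (u - v)/2 := by ring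
      rw [e, abs_div]
      simp only [abs_two]
      linarith
    calc |Real.exp (-(u/2)) - Real.exp (-(v/2))|
        ≤ |u/2 - v/2| * Real.exp (-(Qx/(2*M))) := h1
      _ ≤ (dd * Qx / m^2 / 2) * Real.exp (-(Qx/(2*M))) :=
          mul_le_mul_of_nonneg_right h2 (Real.exp_pos _).le
  have T1 : |a - a'| * E1 ≤ A1 * dd * e4 :=
    mul_le_mul haa' hE1le (by rw [hE1]; positivity) (by positivity)
  have T2 : a' * |E1 - E2| ≤ (2 * M / m ^ 2) * amax * dd * e4 := by
    calc a' * |E1 - E2| ≤ amax * ((dd * Qx / m^2 / 2) * (e4 * e4)) :=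
          mul_le_mul ha'max hdiffE (abs_nonneg _) hamax0.le
      _ = (amax * dd / (2 * m^2)) * ((Qx * e4) * e4) := by ring
      _ ≤ (amax * dd / (2 * m^2)) * ((4 * M) * e4) := by
          apply mul_le_mul_of_nonneg_left _ (by positivity)
          exact mul_le_mul_of_nonneg_right eQ he40.le
      _ = (2 * M / m ^ 2) * amax * dd * e4 := by ring
  have final : |c * a * E1 - c * a' * E2|
      ≤ c * (A1 * dd * e4 + (2 * M / m ^ 2) * amax * dd * e4) := by
    rw [split, abs_mul, abs_of_pos hc0]
    apply mul_le_mul_of_nonneg_left _ hc0.le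
    calc |(a - a') * E1 + a' * (E1 - E2)| ≤ |(a - a') * E1| + |a' * (E1 - E2)| :=
          abs_add_le _ _
      _ = |a - a'| * E1 + a' * |E1 - E2| := by
          rw [abs_mul, abs_mul, abs_of_nonneg (by rw [hE1]; positivity : (0:ℝ) ≤ E1),
            abs_of_nonneg ha'0]
      _ ≤ A1 * dd * e4 + (2 * M / m ^ 2) * amax * dd * e4 := add_le_add T1 T2
  have harg : -(1/(4*M)) * Qx = -(Qx/(4*M)) := by ring
  calc |c * a * E1 - c * a' * E2|
      ≤ c * (A1 * dd * e4 + (2 * M / m ^ 2) * amax * dd * e4) := final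
    _ = (c * (A1 + (2 * M / m ^ 2) * amax) * dd) * e4 := by ring
    _ = (c * (A1 + (2 * M / m ^ 2) * amax) * dd) * Real.exp (-(1/(4*M)) * Qx) := by
        rw [harg, he4]

lemma abs_setIntegral_diff_le {α : Type*} [MeasurableSpace α] {μ : Measure α}
    {f g h : α → ℝ} (hfi : Integrable f μ) (hgi : Integrable g μ)
    (hhi : Integrable h μ) (hpt : ∀ x, |f x - g x| ≤ h x) (hh0 : ∀ x, 0 ≤ h x)
    (B : Set α) :
    |(∫ x in B, f x ∂μ) - ∫ x in B, g x ∂μ| ≤ ∫ x, h x ∂μ := by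
  calc |(∫ x in B, f x ∂μ) - ∫ x in B, g x ∂μ| = |∫ x in B, (f x - g x) ∂μ| := by
        rw [integral_sub hfi.integrableOn hgi.integrableOn]
    _ ≤ ∫ x in B, |f x - g x| ∂μ := by
        simpa [Real.norm_eq_abs] using
          norm_integral_le_integral_norm (μ := μ.restrict B) (fun x => f x - g x)
    _ ≤ ∫ x in B, h x ∂μ :=
        integral_mono ((hfi.sub hgi).abs.integrableOn) hhi.integrableOn
          (fun x => hpt x)
    _ ≤ ∫ x, h x ∂μ :=
        setIntegral_le_integral hhi (Filter.Eventually.of_forall fun x => hh0 x)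

-- main analytic lemma
lemma gauss_setIntegral_diff {q : ℕ} {m M : ℝ} (hm : 0 < m) (hmM : m ≤ M) :
    ∃ K > (0:ℝ), ∀ (S S' : Matrix (Fin q) (Fin q) ℝ), S.IsSymm → S.PosDef →
    S'.IsSymm → S'.PosDef →
    (∀ x : Fin q → ℝ, m * ∑ i, x i ^ 2 ≤ x ⬝ᵥ (S *ᵥ x) ∧
      x ⬝ᵥ (S *ᵥ x) ≤ M * ∑ i, x i ^ 2) →
    (∀ x : Fin q → ℝ, m * ∑ i, x i ^ 2 ≤ x ⬝ᵥ (S' *ᵥ x) ∧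
      x ⬝ᵥ (S' *ᵥ x) ≤ M * ∑ i, x i ^ 2) →
    ∀ dd : ℝ, Real.sqrt (∑ i, ∑ j, (S i j - S' i j) ^ 2) ≤ dd → 0 ≤ dd →
    ∀ B : Set (Fin q → ℝ), MeasurableSet B →
    |(∫ x in B, (2 * π) ^ (-(q : ℝ) / 2) * S.det ^ (-(1 : ℝ) / 2) *
        Real.exp (-(x ⬝ᵥ (S⁻¹ *ᵥ x)) / 2)) -
     (∫ x in B, (2 * π) ^ (-(q : ℝ) / 2) * S'.det ^ (-(1 : ℝ) / 2) *
        Real.exp (-(x ⬝ᵥ (S'⁻¹ *ᵥ x)) / 2))| ≤ K * dd := by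
  have hM : 0 < M := lt_of_lt_of_le hm hmM
  set c : ℝ := (2 * π) ^ (-(q : ℝ) / 2) with hc
  have hc0 : 0 < c := Real.rpow_pos_of_pos (by positivity) _
  set δ0 : ℝ := m ^ q / (Nat.factorial q) with hδ0
  have hδ0pos : 0 < δ0 := by positivity
  set A3 : ℝ := ((Nat.factorial q) * (q * (max M 1) ^ q)) / (2 * δ0 * Real.sqrt δ0)
    + (2 * M / m ^ 2) * (Real.sqrt δ0)⁻¹ with hA3
  have hA30 : 0 ≤ A3 := by positivity
  set Iq : ℝ := ∫ x : Fin q → ℝ, Real.exp (-(1/(4*M)) * ∑ i, x i ^ 2) with hIq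
  have hIq0 : 0 ≤ Iq := integral_nonneg fun x => (Real.exp_pos _).le
  refine ⟨c * A3 * Iq + 1, by positivity, ?_⟩
  intro S S' hsymS hpdS hymS' hpdS' hformS hformS' dd hdd hdd0 B hB
  set a : ℝ := S.det ^ (-(1:ℝ)/2) with ha
  set a' : ℝ := S'.det ^ (-(1:ℝ)/2) with ha'
  set f : (Fin q → ℝ) → ℝ := fun x => c * a * Real.exp (-(x ⬝ᵥ (S⁻¹ *ᵥ x)) / 2) with hf
  set g : (Fin q → ℝ) → ℝ := fun x => c * a' * Real.exp (-(x ⬝ᵥ (S'⁻¹ *ᵥ x)) / 2) with hg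
  have hinvS := invform_bounds hm hmM hsymS hpdS (fun y => (hformS y).1)
    (fun y => (hformS y).2)
  have hinvS' := invform_bounds hm hmM hymS' hpdS' (fun y => (hformS' y).1)
    (fun y => (hformS' y).2)
  have ha0 : 0 ≤ a := Real.rpow_nonneg hpdS.det_pos.le _
  have ha'0 : 0 ≤ a' := Real.rpow_nonneg hpdS'.det_pos.le _
  have hfi : Integrable f :=
    gauss_density_integrable hM hc0.le ha0 (fun x => (hinvS x).1)
  have hgi : Integrable g :=
    gauss_density_integrable hM hc0.le ha'0 (fun x => (hinvS' x).1)
  have hptwise : ∀ x : Fin q → ℝ, |f x - g x| ≤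
      (c * A3 * dd) * Real.exp (-(1/(4*M)) * ∑ i, x i ^ 2) := by
    intro x
    have h := gauss_pointwise_diff hm hmM hsymS hpdS hymS' hpdS' hformS hformS' hdd hdd0 x
    rw [hA3, hδ0, hc]
    exact h
  have hmaji : Integrable (fun x : Fin q → ℝ =>
      (c * A3 * dd) * Real.exp (-(1/(4*M)) * ∑ i, x i ^ 2)) :=
    (integrable_gauss (by positivity)).const_mul _
  have key := abs_setIntegral_diff_le hfi hgi hmaji hptwise
    (fun x => by positivity) B
  have hval : (∫ x : Fin q → ℝ, (c * A3 * dd) * Real.exp (-(1/(4*M)) * ∑ i, x i ^ 2))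
      = (c * A3 * dd) * Iq := by
    rw [MeasureTheory.integral_const_mul, hIq]
  rw [hval] at key
  refine key.trans ?_
  nlinarith

/-- If probability measures `μ_n` on `ℝ^q` satisfy
`sup_{B ∈ 𝒞_q} |μ_n(B) − Φ(B;Σ_n)| ≤ c_n`, and `Σ'_n` is another covariance
sequence with `‖Σ_n − Σ'_n‖ ≤ d_n` and eigenvalues of both in `[m,M] ⊂ (0,∞)`,
then `sup_{B ∈ 𝒞_q} |μ_n(B) − Φ(B;Σ'_n)| ≤ c_n + K(q,m,M) d_n`.
Here `Φ(B;Σ) = ∫_B φ(x;Σ) dx` with `φ` the centered Gaussian density. -/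
theorem stmt12 (q : ℕ) (m M : ℝ) (hm : 0 < m) (hmM : m ≤ M) :
    ∃ K > (0 : ℝ),
      ∀ (μ : ℕ → Measure (Fin q → ℝ)), (∀ n, IsProbabilityMeasure (μ n)) →
      ∀ (S S' : ℕ → Matrix (Fin q) (Fin q) ℝ) (c d : ℕ → ℝ),
      (∀ n, (S n).IsSymm ∧ (S n).PosDef ∧ (S' n).IsSymm ∧ (S' n).PosDef) →
      (∀ n, ∀ x : Fin q → ℝ,
        m * ∑ i, x i ^ 2 ≤ x ⬝ᵥ (S n *ᵥ x) ∧ x ⬝ᵥ (S n *ᵥ x) ≤ M * ∑ i, x i ^ 2 ∧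
        m * ∑ i, x i ^ 2 ≤ x ⬝ᵥ (S' n *ᵥ x) ∧
          x ⬝ᵥ (S' n *ᵥ x) ≤ M * ∑ i, x i ^ 2) →
      (∀ n, Real.sqrt (∑ i, ∑ j, (S n i j - S' n i j) ^ 2) ≤ d n) →
      (∀ n, 0 ≤ d n) →
      (∀ n, ∀ B : Set (Fin q → ℝ), Convex ℝ B → MeasurableSet B →
        |(μ n B).toReal - ∫ x in B,
            (2 * π) ^ (-(q : ℝ) / 2) * (S n).det ^ (-(1 : ℝ) / 2) *
              Real.exp (-(x ⬝ᵥ ((S n)⁻¹ *ᵥ x)) / 2)| ≤ c n) →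
      ∀ n, ∀ B : Set (Fin q → ℝ), Convex ℝ B → MeasurableSet B →
        |(μ n B).toReal - ∫ x in B,
            (2 * π) ^ (-(q : ℝ) / 2) * (S' n).det ^ (-(1 : ℝ) / 2) *
              Real.exp (-(x ⬝ᵥ ((S' n)⁻¹ *ᵥ x)) / 2)| ≤ c n + K * d n := by
  obtain ⟨K, hK0, hKspec⟩ := gauss_setIntegral_diff (q := q) hm hmM
  refine ⟨K, hK0, ?_⟩
  intro μ hμ S S' c d hstruct hform hfrob hd0 hbase n B hconv hmeas
  have h1 := hbase n B hconv hmeas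
  have h2 := hKspec (S n) (S' n) (hstruct n).1 (hstruct n).2.1 (hstruct n).2.2.1
    (hstruct n).2.2.2
    (fun x => ⟨(hform n x).1, (hform n x).2.1⟩)
    (fun x => ⟨(hform n x).2.2.1, (hform n x).2.2.2⟩)
    (d n) (hfrob n) (hd0 n) B hmeas
  have h3 := abs_sub_le ((μ n B).toReal)
    (∫ x in B, (2 * π) ^ (-(q : ℝ) / 2) * (S n).det ^ (-(1 : ℝ) / 2) *
      Real.exp (-(x ⬝ᵥ ((S n)⁻¹ *ᵥ x)) / 2))
    (∫ x in B, (2 * π) ^ (-(q : ℝ) / 2) * (S' n).det ^ (-(1 : ℝ) / 2) *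
      Real.exp (-(x ⬝ᵥ ((S' n)⁻¹ *ᵥ x)) / 2))
  linarith
end
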